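/- arXiv:1605.01011 — 8 statements merged into one kernel-verified Lean document; each statement's English description precedes it below -/
import Mathlib

section
/- Taking a Cartesian product with a cube preserves manifold structure, global reach and local reach (Lemma 4.2): Fix integers d, k ≥ 1 with d + k ≤ m, a real K_I ≥ 1, and reals 0 < τ_g ≤ τ_ℓ. Let M ⊆ [−K_I, K_I]^{m−k} ⊆ ℝ^{m−k} be a compact topological d-manifold with boundary having reach at least τ_g and local reach at least τ_ℓ. Then M × [−K_I, K_I]^k ⊆ [−K_I, K_I]^m ⊆ ℝ^m is a compact topological (d+k)-manifold with boundary having reach at least τ_g and local reach at least τ_ℓ. -/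
open MeasureTheory Metric Set

noncomputable section

/-- `M ⊆ E` has reach at least `τ`: every point at distance `< τ` from `M`
has a unique nearest point in `M`. -/
def HasReachGE {E : Type*} [MetricSpace E] (M : Set E) (τ : ℝ) : Prop :=
  ∀ x : E, Metric.infDist x M < τ →
    ∃! y, y ∈ M ∧ dist x y = Metric.infDist x M

/-- `M` has local reach at least `τ`: every `p ∈ M` has a neighborhood of `p`
in `M` with reach at least `τ`. -/
def HasLocalReachGE {E : Type*} [MetricSpace E] (M : Set E) (τ : ℝ) : Prop :=
  ∀ p ∈ M, ∃ U : Set E, U ⊆ M ∧ U ∈ nhdsWithin p M ∧ HasReachGE U τ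

/-- `M` is a compact topological `d`-manifold with boundary: `M` is compact and
every point of `M` has an open neighborhood in `M` homeomorphic to an open subset
of the half-space `[0,∞) × ℝ^{d-1}`. -/
def IsCompactTopManifoldWithBoundary {E : Type*} [TopologicalSpace E] (d : ℕ)
    (M : Set E) : Prop :=
  IsCompact M ∧
  ∀ p : M, ∃ U : Set M, IsOpen U ∧ p ∈ U ∧
    ∃ V : Set {x : ℝ × EuclideanSpace ℝ (Fin (d - 1)) // 0 ≤ x.1},
      IsOpen V ∧ Nonempty (U ≃ₜ V)

/-- The cube `[-K, K]^j` in `ℝ^j`. -/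
def cube (j : ℕ) (K : ℝ) : Set (EuclideanSpace ℝ (Fin j)) := {x | ∀ i, |x i| ≤ K}

/-- The Cartesian product `M × [-K, K]^b ⊆ ℝ^a × ℝ^b`, where `ℝ^a × ℝ^b` carries
the `L²` (Euclidean) norm, so that `‖(x, y)‖² = ‖x‖² + ‖y‖²`. -/
def prodWithCube {a b : ℕ} (M : Set (EuclideanSpace ℝ (Fin a))) (K : ℝ) :
    Set (WithLp 2 (EuclideanSpace ℝ (Fin a) × EuclideanSpace ℝ (Fin b))) :=
  {z | (WithLp.equiv 2 _ z).1 ∈ M ∧ ∀ i, |(WithLp.equiv 2 _ z).2 i| ≤ K}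

/-! The `ℓ²` distance on a product splits as `dist² = dist₁² + dist₂²`. Hence a point `z` within
`τ` of `M × C` has its components within `τ` of `M` and of `C`, and the nearest points of `z` in
`M × C` are exactly the pairs of nearest points of its components. The cube `C` is closed and
convex, so every point has a unique nearest point in it: `C` has infinite reach, and `M × C`
inherits the (local) reach of `M`.

For the manifold structure, `C ≅ [-K, K]ᵏ`, and `[-K, K]` is a 1-manifold with boundary.
Products of half-spaces are half-spaces because the quadrant `[0, ∞)²` is homeomorphic to the
half-plane `[0, ∞) × ℝ`, so `M × [-K, K]ᵏ` is a manifold with boundary by induction on `k`. -/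

abbrev HalfSpace (n : ℕ) : Type := {x : ℝ × EuclideanSpace ℝ (Fin n) // 0 ≤ x.1}

/-- `IsCompactTopManifoldWithBoundary d M` unfolds to
`IsCompact M ∧ IsLocallyModeledOn (HalfSpace (d - 1)) M`. -/
def IsLocallyModeledOn (H X : Type*) [TopologicalSpace H] [TopologicalSpace X] : Prop :=
  ∀ p : X, ∃ U : Set X, IsOpen U ∧ p ∈ U ∧ ∃ V : Set H, IsOpen V ∧ Nonempty (U ≃ₜ V)

namespace IsLocallyModeledOn

variable {H H' X Y : Type*} [TopologicalSpace H] [TopologicalSpace H'] [TopologicalSpace X]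
  [TopologicalSpace Y]

theorem of_chartedSpace [ChartedSpace H X] : IsLocallyModeledOn H X := fun p =>
  ⟨_, (chartAt H p).open_source, mem_chart_source H p, _, (chartAt H p).open_target,
    ⟨(chartAt H p).toHomeomorphSourceTarget⟩⟩

theorem map_homeomorph (h : IsLocallyModeledOn H X) (e : X ≃ₜ Y) : IsLocallyModeledOn H Y := by
  intro p
  obtain ⟨U, hU, hpU, V, hV, ⟨φ⟩⟩ := h (e.symm p)
  exact ⟨e '' U, e.isOpenMap U hU, ⟨_, hpU, e.apply_symm_apply p⟩, V, hV,
    ⟨(e.image U).symm.trans φ⟩⟩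

theorem model_homeomorph (h : IsLocallyModeledOn H X) (e : H ≃ₜ H') :
    IsLocallyModeledOn H' X := by
  intro p
  obtain ⟨U, hU, hpU, V, hV, ⟨φ⟩⟩ := h p
  exact ⟨U, hU, hpU, e '' V, e.isOpenMap V hV, ⟨φ.trans (e.image V)⟩⟩

theorem prod (hX : IsLocallyModeledOn H X) (hY : IsLocallyModeledOn H' Y) :
    IsLocallyModeledOn (H × H') (X × Y) := by
  rintro ⟨p, q⟩
  obtain ⟨U, hU, hpU, V, hV, ⟨φ⟩⟩ := hX p
  obtain ⟨U', hU', hqU', V', hV', ⟨φ'⟩⟩ := hY q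
  exact ⟨U ×ˢ U', hU.prod hU', ⟨hpU, hqU'⟩, V ×ˢ V', hV.prod hV',
    ⟨((Homeomorph.Set.prod U U').trans (φ.prodCongr φ')).trans (Homeomorph.Set.prod V V').symm⟩⟩

end IsLocallyModeledOn

def halfSpaceHomeomorphIciProd (n : ℕ) :
    HalfSpace n ≃ₜ Ici (0 : ℝ) × EuclideanSpace ℝ (Fin n) where
  toFun x := (⟨x.1.1, x.2⟩, x.1.2)
  invFun y := ⟨(y.1, y.2), y.1.2⟩
  left_inv _ := rfl
  right_inv _ := rfl

/-- A piecewise linear version of the angle-doubling map `z ↦ z²`: the first coordinate is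
`2 min(x, y)`. -/
def iciProdIciHomeomorph : Ici (0 : ℝ) × Ici (0 : ℝ) ≃ₜ Ici (0 : ℝ) × ℝ where
  toFun p := (⟨p.1 + p.2 - |(p.1 : ℝ) - p.2|, by
    have : |(p.1 : ℝ) - p.2| ≤ p.1 + p.2 :=
      abs_sub_le_iff.2 ⟨by linarith [p.2.2.out], by linarith [p.1.2.out]⟩
    exact mem_Ici.2 (by linarith)⟩, p.1 - p.2)
  invFun q := (⟨(q.1 + |q.2| + q.2) / 2, mem_Ici.2 (by linarith [neg_abs_le q.2, q.1.2.out])⟩,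
    ⟨(q.1 + |q.2| - q.2) / 2, mem_Ici.2 (by linarith [le_abs_self q.2, q.1.2.out])⟩)
  left_inv p := by ext <;> simp only <;> ring
  right_inv q := by
    have hsub : (q.1 + |q.2| + q.2) / 2 - (q.1 + |q.2| - q.2) / 2 = q.2 := by ring
    ext
    · simp only [hsub]; ring
    · exact hsub

def euclideanSpaceProdHomeomorph (n m : ℕ) :
    ℝ × EuclideanSpace ℝ (Fin n) × EuclideanSpace ℝ (Fin m) ≃ₜ
      EuclideanSpace ℝ (Fin (n + m + 1)) :=
  (ContinuousLinearEquiv.ofFinrankEq (𝕜 := ℝ)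
    (by rw [Module.finrank_prod, Module.finrank_prod]; simp; omega)).toHomeomorph

def halfSpaceProdHomeomorph (n m : ℕ) : HalfSpace n × HalfSpace m ≃ₜ HalfSpace (n + m + 1) :=
  ((halfSpaceHomeomorphIciProd n).prodCongr (halfSpaceHomeomorphIciProd m)).trans <|
    (Homeomorph.prodProdProdComm _ _ _ _).trans <|
      (iciProdIciHomeomorph.prodCongr (Homeomorph.refl _)).trans <|
        (Homeomorph.prodAssoc _ _ _).trans <|
          ((Homeomorph.refl _).prodCongr (euclideanSpaceProdHomeomorph n m)).trans
            (halfSpaceHomeomorphIciProd (n + m + 1)).symm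

def euclideanHalfSpaceOneHomeomorph : EuclideanHalfSpace 1 ≃ₜ HalfSpace 0 where
  toFun x := ⟨(x.1 0, 0), x.2⟩
  invFun y := ⟨WithLp.toLp 2 fun _ => y.1.1, y.2⟩
  left_inv x := by ext i; rw [Subsingleton.elim i 0]
  right_inv y := Subtype.ext (Prod.ext rfl (Subsingleton.elim _ _))

theorem isLocallyModeledOn_halfSpace_Icc {a b : ℝ} (hab : a < b) :
    IsLocallyModeledOn (HalfSpace 0) (Icc a b) :=
  haveI : Fact (a < b) := ⟨hab⟩
  IsLocallyModeledOn.of_chartedSpace.model_homeomorph euclideanHalfSpaceOneHomeomorph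

def finSuccArrowHomeomorph (Y : Type*) [TopologicalSpace Y] (k : ℕ) :
    (Fin (k + 1) → Y) ≃ₜ (Fin k → Y) × Y :=
  (Fin.appendHomeomorph k 1).symm.trans
    ((Homeomorph.refl _).prodCongr (Homeomorph.funUnique (Fin 1) Y))

theorem IsLocallyModeledOn.prod_fin_arrow {X Y : Type*} [TopologicalSpace X]
    [TopologicalSpace Y] {n : ℕ} (hX : IsLocallyModeledOn (HalfSpace n) X)
    (hY : IsLocallyModeledOn (HalfSpace 0) Y) :
    ∀ k, IsLocallyModeledOn (HalfSpace (n + k)) (X × (Fin k → Y))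
  | 0 => hX.map_homeomorph (Homeomorph.prodUnique X (Fin 0 → Y)).symm
  | k + 1 =>
    (((hX.prod_fin_arrow hY k).prod hY).model_homeomorph
      (halfSpaceProdHomeomorph _ _)).map_homeomorph
        (((Homeomorph.refl X).prodCongr (finSuccArrowHomeomorph Y k)).trans
          (Homeomorph.prodAssoc _ _ _).symm).symm

def cubeHomeomorph (j : ℕ) (K : ℝ) : cube j K ≃ₜ (Fin j → Icc (-K) K) where
  toFun x i := ⟨x.1 i, abs_le.1 (x.2 i)⟩
  invFun y := ⟨WithLp.toLp 2 fun i => y i, fun i => abs_le.2 (y i).2⟩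
  left_inv _ := rfl
  right_inv _ := rfl

theorem prodWithCube_eq {a b : ℕ} (M : Set (EuclideanSpace ℝ (Fin a))) (K : ℝ) :
    prodWithCube (b := b) M K = WithLp.ofLp ⁻¹' (M ×ˢ cube b K) := rfl

def prodWithCubeHomeomorph {a b : ℕ} (M : Set (EuclideanSpace ℝ (Fin a))) (K : ℝ) :
    prodWithCube (b := b) M K ≃ₜ M × (Fin b → Icc (-K) K) :=
  (((WithLp.homeomorphProd 2 _ _).sets (prodWithCube_eq M K)).trans
    (Homeomorph.Set.prod M (cube b K))).trans ((Homeomorph.refl M).prodCongr (cubeHomeomorph b K))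

theorem IsCompactTopManifoldWithBoundary.prod_cube {a d : ℕ}
    {M : Set (EuclideanSpace ℝ (Fin a))} (hM : IsCompactTopManifoldWithBoundary d M)
    (hd : 1 ≤ d) (b : ℕ) {K : ℝ} (hK : 0 < K) :
    IsCompactTopManifoldWithBoundary (d + b) (prodWithCube (b := b) M K) := by
  have : CompactSpace M := isCompact_iff_compactSpace.1 hM.1
  refine ⟨isCompact_iff_compactSpace.2 (prodWithCubeHomeomorph M K).symm.compactSpace, ?_⟩
  have h := IsLocallyModeledOn.prod_fin_arrow (X := M) hM.2
    (isLocallyModeledOn_halfSpace_Icc (neg_lt_self hK)) b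
  rw [show d - 1 + b = d + b - 1 by omega] at h
  exact h.map_homeomorph (prodWithCubeHomeomorph M K).symm

section Reach

open Filter Topology
open scoped InnerProductSpace

variable {E F : Type*}

theorem HasReachGE.nonempty [MetricSpace E] [Nonempty E] {S : Set E} {τ : ℝ}
    (h : HasReachGE S τ) (hτ : 0 < τ) : S.Nonempty := by
  rcases S.eq_empty_or_nonempty with rfl | hS
  · obtain ⟨y, ⟨hy, -⟩, -⟩ := h (Classical.arbitrary E) (by rwa [infDist_empty])
    exact ⟨y, hy⟩
  · exact hS

theorem Convex.hasReachGE [NormedAddCommGroup F] [InnerProductSpace ℝ F] {C : Set F}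
    (hC : Convex ℝ C) (hc : IsComplete C) (hne : C.Nonempty) (τ : ℝ) : HasReachGE C τ := by
  intro x _
  have nearest_iff : ∀ y ∈ C, dist x y = infDist x C ↔ ∀ w ∈ C, ⟪x - y, w - y⟫_ℝ ≤ 0 := by
    intro y hy
    simp_rw [infDist_eq_iInf, dist_eq_norm]
    exact norm_eq_iInf_iff_real_inner_le_zero hC hy
  obtain ⟨y, hy, hxy⟩ := exists_norm_eq_iInf_of_complete_convex hne hc hC x
  have hxy : dist x y = infDist x C := by simpa [infDist_eq_iInf, dist_eq_norm] using hxy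
  refine ⟨y, ⟨hy, hxy⟩, fun y' ⟨hy', hxy'⟩ => ?_⟩
  have h₁ := (nearest_iff y hy).1 hxy y' hy'
  have h₂ := (nearest_iff y' hy').1 hxy' y hy
  have hsq : ‖y' - y‖ ^ 2 = ⟪x - y, y' - y⟫_ℝ + ⟪x - y', y - y'⟫_ℝ := by
    rw [← real_inner_self_eq_norm_sq, show y - y' = -(y' - y) by abel, inner_neg_right,
      ← sub_eq_add_neg, ← inner_sub_left, sub_sub_sub_cancel_left]
  rw [← sub_eq_zero, ← norm_eq_zero]
  nlinarith [norm_nonneg (y' - y)]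

variable [NormedAddCommGroup E] [NormedAddCommGroup F] {S : Set E} {T : Set F} {τ : ℝ}

theorem sqrt_infDist_sq_add_infDist_sq_le_infDist_prod (hS : S.Nonempty) (hT : T.Nonempty)
    (z : WithLp 2 (E × F)) :
    √(infDist z.fst S ^ 2 + infDist z.snd T ^ 2) ≤ infDist z (WithLp.ofLp ⁻¹' (S ×ˢ T)) := by
  refine (le_infDist ((hS.prod hT).preimage (WithLp.equiv 2 (E × F)).surjective)).2 ?_
  rintro w ⟨hw₁, hw₂⟩
  rw [WithLp.prod_dist_eq_of_L2]
  gcongr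
  · exact infDist_nonneg
  · exact infDist_le_dist_of_mem hw₁
  · exact infDist_nonneg
  · exact infDist_le_dist_of_mem hw₂

theorem HasReachGE.prod (hS : HasReachGE S τ) (hT : HasReachGE T τ) :
    HasReachGE (WithLp.ofLp ⁻¹' (S ×ˢ T) : Set (WithLp 2 (E × F))) τ := by
  intro z hz
  have hτ : 0 < τ := infDist_nonneg.trans_lt hz
  have : Nonempty E := ⟨z.fst⟩
  have : Nonempty F := ⟨z.snd⟩
  set a := infDist z.fst S
  set b := infDist z.snd T
  have hlow := sqrt_infDist_sq_add_infDist_sq_le_infDist_prod (hS.nonempty hτ) (hT.nonempty hτ) z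
  have ha : a < τ :=
    (Real.le_sqrt_of_sq_le (le_add_of_nonneg_right (sq_nonneg b))).trans_lt (hlow.trans_lt hz)
  have hb : b < τ :=
    (Real.le_sqrt_of_sq_le (le_add_of_nonneg_left (sq_nonneg a))).trans_lt (hlow.trans_lt hz)
  obtain ⟨x, ⟨hxS, hxa⟩, hx_unique⟩ := hS z.fst ha
  obtain ⟨y, ⟨hyT, hyb⟩, hy_unique⟩ := hT z.snd hb
  have hdist : dist z (WithLp.toLp 2 (x, y)) = √(a ^ 2 + b ^ 2) := by
    rw [WithLp.prod_dist_eq_of_L2]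
    show √(dist z.fst x ^ 2 + dist z.snd y ^ 2) = _
    rw [hxa, hyb]
  have heq : infDist z (WithLp.ofLp ⁻¹' (S ×ˢ T)) = √(a ^ 2 + b ^ 2) :=
    le_antisymm (hdist ▸ infDist_le_dist_of_mem ⟨hxS, hyT⟩) hlow
  refine ⟨WithLp.toLp 2 (x, y), ⟨⟨hxS, hyT⟩, hdist.trans heq.symm⟩, ?_⟩
  rintro w ⟨⟨hw₁, hw₂⟩, hw⟩
  have ha' : a ≤ dist z.fst w.fst := infDist_le_dist_of_mem hw₁
  have hb' : b ≤ dist z.snd w.snd := infDist_le_dist_of_mem hw₂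
  have ha₂ := pow_le_pow_left₀ infDist_nonneg ha' 2
  have hb₂ := pow_le_pow_left₀ infDist_nonneg hb' 2
  rw [heq, WithLp.prod_dist_eq_of_L2, Real.sqrt_inj (by positivity) (by positivity)] at hw
  have h₁ : dist z.fst w.fst = a :=
    (pow_left_inj₀ dist_nonneg infDist_nonneg two_ne_zero).1 (by linarith)
  have h₂ : dist z.snd w.snd = b :=
    (pow_left_inj₀ dist_nonneg infDist_nonneg two_ne_zero).1 (by linarith)
  rw [← hx_unique w.fst ⟨hw₁, h₁⟩, ← hy_unique w.snd ⟨hw₂, h₂⟩]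
  rfl

theorem HasLocalReachGE.prod (hS : HasLocalReachGE S τ) (hT : HasReachGE T τ) :
    HasLocalReachGE (WithLp.ofLp ⁻¹' (S ×ˢ T) : Set (WithLp 2 (E × F))) τ := by
  rintro z ⟨hz₁, -⟩
  obtain ⟨U, hUS, hU, hUreach⟩ := hS _ hz₁
  refine ⟨WithLp.ofLp ⁻¹' (U ×ˢ T), preimage_mono (prod_mono hUS subset_rfl), ?_,
    hUreach.prod hT⟩
  have hofLp : Tendsto WithLp.ofLp (𝓝[WithLp.ofLp ⁻¹' (S ×ˢ T)] z) (𝓝[S ×ˢ T] z.ofLp) :=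
    tendsto_nhdsWithin_iff.2 ⟨(WithLp.prod_continuous_ofLp 2 E F).continuousWithinAt,
      eventually_mem_nhdsWithin⟩
  apply hofLp
  rw [nhdsWithin_prod_eq]
  exact prod_mem_prod hU self_mem_nhdsWithin

end Reach

theorem convex_cube (j : ℕ) (K : ℝ) : Convex ℝ (cube j K) := by
  have hcube : cube j K = ⋂ i, EuclideanSpace.proj i ⁻¹' Icc (-K) K := by
    ext; simp [cube, abs_le]
  rw [hcube]
  exact convex_iInter fun i =>
    (convex_Icc (-K) K).linear_preimage (EuclideanSpace.proj i).toLinearMap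

theorem isCompact_cube (j : ℕ) (K : ℝ) : IsCompact (cube j K) :=
  isCompact_iff_compactSpace.2 (cubeHomeomorph j K).symm.compactSpace

theorem hasReachGE_cube (j : ℕ) {K : ℝ} (hK : 0 ≤ K) (τ : ℝ) : HasReachGE (cube j K) τ :=
  (convex_cube j K).hasReachGE (isCompact_cube j K).isComplete ⟨0, fun i => by simpa using hK⟩ τ

theorem product_with_cube_preserves_regularity_general
    (m d k : ℕ) (KI τg τℓ : ℝ)
    (hd : 1 ≤ d)
    (hKI : 1 ≤ KI)
    (M : Set (EuclideanSpace ℝ (Fin (m - k))))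
    (hMan : IsCompactTopManifoldWithBoundary d M)
    (hsub : M ⊆ cube (m - k) KI)
    (hreach : HasReachGE M τg) (hlocal : HasLocalReachGE M τℓ) :
    IsCompactTopManifoldWithBoundary (d + k) (prodWithCube (b := k) M KI) ∧
    prodWithCube (b := k) M KI ⊆ prodWithCube (b := k) (cube (m - k) KI) KI ∧
    HasReachGE (prodWithCube (b := k) M KI) τg ∧
    HasLocalReachGE (prodWithCube (b := k) M KI) τℓ := by
  have hK : 0 < KI := one_pos.trans_le hKI
  refine ⟨hMan.prod_cube hd k hK, fun z hz => ⟨hsub hz.1, hz.2⟩, ?_, ?_⟩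
  · rw [prodWithCube_eq]
    exact hreach.prod (hasReachGE_cube k hK.le τg)
  · rw [prodWithCube_eq]
    exact hlocal.prod (hasReachGE_cube k hK.le τℓ)

/-- Taking a Cartesian product with a cube preserves manifold structure, global
reach and local reach (Lemma 4.2): if `M ⊆ [-K_I,K_I]^{m-k}` is a compact
`d`-manifold with boundary with reach `≥ τ_g` and local reach `≥ τ_ℓ`, then
`M × [-K_I,K_I]^k ⊆ [-K_I,K_I]^m` is a compact `(d+k)`-manifold with boundary
with reach `≥ τ_g` and local reach `≥ τ_ℓ`. -/
theorem product_with_cube_preserves_regularity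
    (m d k : ℕ) (KI τg τℓ : ℝ)
    (hd : 1 ≤ d) (hk : 1 ≤ k) (hdk : d + k ≤ m)
    (hKI : 1 ≤ KI) (hτg : 0 < τg) (hτgℓ : τg ≤ τℓ)
    (M : Set (EuclideanSpace ℝ (Fin (m - k))))
    (hMan : IsCompactTopManifoldWithBoundary d M)
    (hsub : M ⊆ cube (m - k) KI)
    (hreach : HasReachGE M τg) (hlocal : HasLocalReachGE M τℓ) :
    IsCompactTopManifoldWithBoundary (d + k) (prodWithCube (b := k) M KI) ∧
    prodWithCube (b := k) M KI ⊆ prodWithCube (b := k) (cube (m - k) KI) KI ∧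
    HasReachGE (prodWithCube (b := k) M KI) τg ∧
    HasLocalReachGE (prodWithCube (b := k) M KI) τℓ :=
  product_with_cube_preserves_regularity_general m d k KI τg τℓ hd hKI M hMan hsub hreach hlocal

end
end

section
/- Le Cam's two-point (two-mixture) lemma (Lemma 4.1): Let (𝒳, ℱ) be a measurable space, let Θ be a set, and let ℓ : Θ × Θ → [0,∞) be a function that is symmetric and satisfies the triangle inequality ℓ(s, t) ≤ ℓ(s, u) + ℓ(u, t) for all s, t, u ∈ Θ. Let 𝒫 be a set of probability measures on (𝒳, ℱ), let θ : 𝒫 → Θ, let θ₁, θ₂ ∈ Θ, and let 𝒫₁, 𝒫₂ ⊆ 𝒫 satisfy θ(P) = θᵢ for every P ∈ 𝒫ᵢ, i = 1, 2. Let Q₁ and Q₂ be finite convex combinations of elements of 𝒫₁ and of 𝒫₂ respectively, and suppose Q₁, Q₂ are absolutely continuous with respect to a σ-finite measure ν on (𝒳, ℱ), with densities q₁ and q₂. Then for every estimator θ̂ : 𝒳 → Θ such that x ↦ ℓ(θ̂(x), t) is measurable for each t ∈ Θ, sup_{P ∈ 𝒫} ∫ ℓ(θ̂(x), θ(P)) dP(x)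 ≥ (ℓ(θ₁, θ₂)/4) · ∫ min(q₁(x), q₂(x)) dν(x). -/
open MeasureTheory Set

noncomputable section

/-- `Q` is a finite convex combination `Σ_j w_j P_j` of elements `P_j` of the
set `S` of probability measures, with `w_j ≥ 0` and `Σ_j w_j = 1`. -/
def IsFiniteConvexCombOf {𝒳 : Type*} [MeasurableSpace 𝒳]
    (Q : Measure 𝒳) (S : Set (Measure 𝒳)) : Prop :=
  ∃ (N : ℕ) (w : Fin N → ℝ) (P : Fin N → Measure 𝒳),
    (∀ j, 0 ≤ w j) ∧ (∑ j, w j = 1) ∧ (∀ j, P j ∈ S) ∧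
    Q = ∑ j, ENNReal.ofReal (w j) • P j

/-- Le Cam's two-point (two-mixture) lemma (Lemma 4.1): if `ℓ` is a symmetric
nonnegative loss satisfying the triangle inequality, `Pclass₁, Pclass₂ ⊆ Pclass` are classes
of probability measures whose parameter `θ` is constantly `θ₁` resp. `θ₂`, and
`Q₁, Q₂` are finite convex combinations of elements of `Pclass₁` resp. `Pclass₂`, with
densities `q₁, q₂` with respect to a σ-finite measure `ν`, then for every
estimator `θ̂`,
`sup_{P ∈ Pclass} ∫ ℓ(θ̂(x), θ(P)) dP(x) ≥ (ℓ(θ₁,θ₂)/4) ∫ min(q₁, q₂) dν`. -/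
theorem le_cam_two_mixture_lemma
    {𝒳 Θ : Type*} [MeasurableSpace 𝒳]
    (ℓ : Θ → Θ → ℝ)
    (hℓ_nonneg : ∀ s t, 0 ≤ ℓ s t)
    (hℓ_symm : ∀ s t, ℓ s t = ℓ t s)
    (hℓ_tri : ∀ s t u, ℓ s t ≤ ℓ s u + ℓ u t)
    (Pclass : Set (Measure 𝒳)) (hprob : ∀ P ∈ Pclass, IsProbabilityMeasure P)
    (θ : Measure 𝒳 → Θ) (θ₁ θ₂ : Θ)
    (Pclass₁ Pclass₂ : Set (Measure 𝒳)) (hP₁ : Pclass₁ ⊆ Pclass) (hP₂ : Pclass₂ ⊆ Pclass)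
    (hθ₁ : ∀ P ∈ Pclass₁, θ P = θ₁) (hθ₂ : ∀ P ∈ Pclass₂, θ P = θ₂)
    (Q₁ Q₂ : Measure 𝒳)
    (hQ₁ : IsFiniteConvexCombOf Q₁ Pclass₁) (hQ₂ : IsFiniteConvexCombOf Q₂ Pclass₂)
    (ν : Measure 𝒳) [SigmaFinite ν]
    (q₁ q₂ : 𝒳 → ENNReal) (hq₁ : Measurable q₁) (hq₂ : Measurable q₂)
    (hden₁ : Q₁ = ν.withDensity q₁) (hden₂ : Q₂ = ν.withDensity q₂)
    (θhat : 𝒳 → Θ)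
    (hθhat : ∀ t : Θ, Measurable fun x => ℓ (θhat x) t) :
    ENNReal.ofReal (ℓ θ₁ θ₂ / 4) * ∫⁻ x, min (q₁ x) (q₂ x) ∂ν ≤
      ⨆ P ∈ Pclass, ∫⁻ x, ENNReal.ofReal (ℓ (θhat x) (θ P)) ∂P := by
  set S := ⨆ P ∈ Pclass, ∫⁻ x, ENNReal.ofReal (ℓ (θhat x) (θ P)) ∂P with hS
  set f := fun x => ENNReal.ofReal (ℓ (θhat x) θ₁) with hfdef
  set g := fun x => ENNReal.ofReal (ℓ (θhat x) θ₂) with hgdef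
  have hf : Measurable f := (hθhat θ₁).ennreal_ofReal
  have hg : Measurable g := (hθhat θ₂).ennreal_ofReal
  have hm : Measurable fun x => min (q₁ x) (q₂ x) := hq₁.min hq₂
  -- convex combination bound
  have key : ∀ (Q : Measure 𝒳) (Pc : Set (Measure 𝒳)) (t : Θ), Pc ⊆ Pclass →
      (∀ P ∈ Pc, θ P = t) → IsFiniteConvexCombOf Q Pc →
      ∫⁻ x, ENNReal.ofReal (ℓ (θhat x) t) ∂Q ≤ S := by
    rintro Q Pc t hsub hθt ⟨N, w, P, hw0, hw1, hPmem, rfl⟩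
    rw [lintegral_finset_sum_measure]
    calc ∑ j, ∫⁻ x, ENNReal.ofReal (ℓ (θhat x) t) ∂(ENNReal.ofReal (w j) • P j)
        ≤ ∑ j : Fin N, ENNReal.ofReal (w j) * S := by
          refine Finset.sum_le_sum fun j _ => ?_
          rw [lintegral_smul_measure]
          refine mul_le_mul_right ?_ _
          have ht : t = θ (P j) := (hθt _ (hPmem j)).symm
          rw [ht, hS]
          exact le_iSup₂_of_le (P j) (hsub (hPmem j)) le_rfl
      _ = S := by
          rw [← Finset.sum_mul, ← ENNReal.ofReal_sum_of_nonneg fun j _ => hw0 j, hw1,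
            ENNReal.ofReal_one, one_mul]
  have h1 : ∫⁻ x, f x ∂Q₁ ≤ S := key Q₁ Pclass₁ θ₁ hP₁ hθ₁ hQ₁
  have h2 : ∫⁻ x, g x ∂Q₂ ≤ S := key Q₂ Pclass₂ θ₂ hP₂ hθ₂ hQ₂
  -- lower bound via densities
  have hI1 : ∫⁻ x, f x * min (q₁ x) (q₂ x) ∂ν ≤ ∫⁻ x, f x ∂Q₁ := by
    rw [hden₁, lintegral_withDensity_eq_lintegral_mul ν hq₁ hf]
    exact lintegral_mono fun x => by
      simpa [mul_comm] using mul_le_mul_right (min_le_left (q₁ x) (q₂ x)) (f x)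
  have hI2 : ∫⁻ x, g x * min (q₁ x) (q₂ x) ∂ν ≤ ∫⁻ x, g x ∂Q₂ := by
    rw [hden₂, lintegral_withDensity_eq_lintegral_mul ν hq₂ hg]
    exact lintegral_mono fun x => by
      simpa [mul_comm] using mul_le_mul_right (min_le_right (q₁ x) (q₂ x)) (g x)
  have hpt : ∀ x, ENNReal.ofReal (ℓ θ₁ θ₂) * min (q₁ x) (q₂ x)
      ≤ f x * min (q₁ x) (q₂ x) + g x * min (q₁ x) (q₂ x) := by
    intro x
    rw [← add_mul]
    refine mul_le_mul_left ?_ _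
    have : ℓ θ₁ θ₂ ≤ ℓ (θhat x) θ₁ + ℓ (θhat x) θ₂ := by
      calc ℓ θ₁ θ₂ ≤ ℓ θ₁ (θhat x) + ℓ (θhat x) θ₂ := hℓ_tri _ _ _
        _ = ℓ (θhat x) θ₁ + ℓ (θhat x) θ₂ := by rw [hℓ_symm θ₁ (θhat x)]
    calc ENNReal.ofReal (ℓ θ₁ θ₂) ≤ ENNReal.ofReal (ℓ (θhat x) θ₁ + ℓ (θhat x) θ₂) :=
          ENNReal.ofReal_le_ofReal this
      _ = f x + g x := ENNReal.ofReal_add (hℓ_nonneg _ _) (hℓ_nonneg _ _)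
  have hmain : ENNReal.ofReal (ℓ θ₁ θ₂) * ∫⁻ x, min (q₁ x) (q₂ x) ∂ν ≤ S + S := by
    calc ENNReal.ofReal (ℓ θ₁ θ₂) * ∫⁻ x, min (q₁ x) (q₂ x) ∂ν
        = ∫⁻ x, ENNReal.ofReal (ℓ θ₁ θ₂) * min (q₁ x) (q₂ x) ∂ν :=
          (lintegral_const_mul _ hm).symm
      _ ≤ ∫⁻ x, (f x * min (q₁ x) (q₂ x) + g x * min (q₁ x) (q₂ x)) ∂ν :=
          lintegral_mono hpt
      _ = ∫⁻ x, f x * min (q₁ x) (q₂ x) ∂ν + ∫⁻ x, g x * min (q₁ x) (q₂ x) ∂ν :=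
          lintegral_add_left (hf.mul hm) _
      _ ≤ S + S := add_le_add (hI1.trans h1) (hI2.trans h2)
  -- final algebra
  have h4 : (4 : ENNReal) * (ENNReal.ofReal (ℓ θ₁ θ₂ / 4) * ∫⁻ x, min (q₁ x) (q₂ x) ∂ν)
      ≤ 4 * S := by
    have e : (4 : ENNReal) * ENNReal.ofReal (ℓ θ₁ θ₂ / 4) = ENNReal.ofReal (ℓ θ₁ θ₂) := by
      rw [show (4 : ENNReal) = ENNReal.ofReal (4 : ℝ) by norm_num,
        ← ENNReal.ofReal_mul (by norm_num)]
      congr 1; ring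
    calc (4 : ENNReal) * (ENNReal.ofReal (ℓ θ₁ θ₂ / 4) * ∫⁻ x, min (q₁ x) (q₂ x) ∂ν)
        = ENNReal.ofReal (ℓ θ₁ θ₂) * ∫⁻ x, min (q₁ x) (q₂ x) ∂ν := by rw [← mul_assoc, e]
      _ ≤ S + S := hmain
      _ = 2 * S := (two_mul S).symm
      _ ≤ 4 * S := mul_le_mul_left (by norm_num) _
  exact (ENNReal.mul_le_mul_iff_right (by norm_num) (by norm_num)).mp h4


end
end

section
/- Interpolation inequality for the inverse hyperbolic cosine (Claim C.1): For all real numbers a, b with 0 ≤ a ≤ b and b > 0, and every λ ∈ [0,1], one has arcosh((1−λ)·cosh(a) + λ·cosh(b)) ≤ (sinh(b/2)/(b/2)) · sqrt((1−λ)·a² + λ·b²). -/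
open Real

noncomputable section

/-- The inverse hyperbolic cosine: `arcosh x = log (x + sqrt (x² - 1))` for
`x ≥ 1`, so that `cosh (arcosh x) = x`. -/
def arcosh (x : ℝ) : ℝ := Real.log (x + Real.sqrt (x ^ 2 - 1))

/-!
Write `M = sinh (b/2) / (b/2)`. By `cosh x = 1 + 2 sinh² (x/2)` and the convexity of `sinh` on
`[0, ∞)`, which makes `sinh x / x` increasing, `cosh a ≤ 1 + M² a² / 2` with equality for `b`.
Averaging, the argument of `arcosh` is at most `1 + (M s)² / 2 ≤ cosh (M s)`, where
`s = √((1-λ) a² + λ b²)`, and `arcosh` is monotone.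
-/

namespace Real

theorem convexOn_sinh : ConvexOn ℝ (Set.Ici 0) sinh := by
  refine MonotoneOn.convexOn_of_deriv (convex_Ici 0) continuous_sinh.continuousOn
    differentiable_sinh.differentiableOn ?_
  rw [deriv_sinh, interior_Ici]
  intro x hx y hy hxy
  exact cosh_le_cosh.2 (by rwa [abs_of_pos hx, abs_of_pos hy])

theorem sinh_le_mul_sinh_div_self {x y : ℝ} (hx : 0 ≤ x) (hxy : x ≤ y) :
    sinh x ≤ x * (sinh y / y) := by
  rcases hx.eq_or_lt with rfl | hx
  · simp
  have hslope := convexOn_sinh.secant_mono (a := 0) Set.self_mem_Ici (Set.mem_Ici.2 hx.le)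
    (Set.mem_Ici.2 (hx.le.trans hxy)) hx.ne' (hx.trans_le hxy).ne' hxy
  simp only [sinh_zero, sub_zero] at hslope
  rwa [div_le_iff₀' hx] at hslope

theorem cosh_eq_one_add_two_mul_sinh_half_sq (x : ℝ) : cosh x = 1 + 2 * sinh (x / 2) ^ 2 := by
  have h := cosh_two_mul (x / 2)
  rw [mul_div_cancel₀ x two_ne_zero, cosh_sq] at h
  linarith

theorem one_add_sq_div_two_le_cosh (x : ℝ) : 1 + x ^ 2 / 2 ≤ cosh x := by
  have hhalf : |x| / 2 ≤ sinh (|x| / 2) := self_le_sinh_iff.2 (by positivity)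
  have hsq : (|x| / 2) ^ 2 ≤ sinh (|x| / 2) ^ 2 := pow_le_pow_left₀ (by positivity) hhalf 2
  rw [← cosh_abs, cosh_eq_one_add_two_mul_sinh_half_sq, ← sq_abs x]
  linarith

theorem cosh_le_one_add_mul_sq_of_sinh_half_le {x c : ℝ} (hx : 0 ≤ x)
    (h : sinh (x / 2) ≤ x / 2 * c) : cosh x ≤ 1 + c ^ 2 * x ^ 2 / 2 := by
  have hsq : sinh (x / 2) ^ 2 ≤ (x / 2 * c) ^ 2 :=
    pow_le_pow_left₀ (sinh_nonneg_iff.2 (by positivity)) h 2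
  rw [cosh_eq_one_add_two_mul_sinh_half_sq]
  linarith

end Real

theorem arcosh_le_of_le_cosh {y c : ℝ} (hy : 0 < y) (hc : 0 ≤ c) (h : y ≤ cosh c) :
    _root_.arcosh y ≤ c := by
  change Real.arcosh y ≤ c
  rw [← arcosh_cosh hc]
  exact (arcosh_le_arcosh hy (cosh_pos c)).2 h

/-- Interpolation inequality for the inverse hyperbolic cosine (Claim C.1): for
`0 ≤ a ≤ b`, `b > 0` and `λ ∈ [0,1]`,
`arcosh((1-λ) cosh a + λ cosh b) ≤ (sinh(b/2)/(b/2)) √((1-λ) a² + λ b²)`. -/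
theorem arcosh_interpolation_inequality
    (a b lam : ℝ) (ha : 0 ≤ a) (hab : a ≤ b) (hb : 0 < b)
    (hlam₀ : 0 ≤ lam) (hlam₁ : lam ≤ 1) :
    _root_.arcosh ((1 - lam) * Real.cosh a + lam * Real.cosh b) ≤
      (Real.sinh (b / 2) / (b / 2)) *
        Real.sqrt ((1 - lam) * a ^ 2 + lam * b ^ 2) := by
  set M := sinh (b / 2) / (b / 2)
  have hb2 : 0 < b / 2 := half_pos hb
  have hM : 0 ≤ M := div_nonneg (sinh_nonneg_iff.2 hb2.le) hb2.le
  have hlam : 0 ≤ 1 - lam := sub_nonneg.2 hlam₁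
  have hq : 0 ≤ (1 - lam) * a ^ 2 + lam * b ^ 2 := by positivity
  have hcosh_a : cosh a ≤ 1 + M ^ 2 * a ^ 2 / 2 :=
    cosh_le_one_add_mul_sq_of_sinh_half_le ha (sinh_le_mul_sinh_div_self (by linarith) (by linarith))
  have hcosh_b : cosh b ≤ 1 + M ^ 2 * b ^ 2 / 2 :=
    cosh_le_one_add_mul_sq_of_sinh_half_le hb.le (by rw [mul_div_cancel₀ _ hb2.ne'])
  have havg : (1 - lam) * cosh a + lam * cosh b ≤
      1 + (M * √((1 - lam) * a ^ 2 + lam * b ^ 2)) ^ 2 / 2 :=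
    calc (1 - lam) * cosh a + lam * cosh b
        ≤ (1 - lam) * (1 + M ^ 2 * a ^ 2 / 2) + lam * (1 + M ^ 2 * b ^ 2 / 2) := by gcongr
      _ = _ := by rw [mul_pow, sq_sqrt hq]; ring
  have hpos : 0 < (1 - lam) * cosh a + lam * cosh b := by
    linarith [mul_nonneg hlam (sub_nonneg.2 (one_le_cosh a)),
      mul_nonneg hlam₀ (sub_nonneg.2 (one_le_cosh b))]
  exact arcosh_le_of_le_cosh hpos (by positivity) (havg.trans (one_add_sq_div_two_le_cosh _))

end
end

section
/- Abstract chaining tail bound for consecutive-increment sums (core of the proof of Lemma 3.1): Let m ≥ 1 be an integer, let α, β be reals with 0 < α < β, and let K ≥ 0. Then there exists a constant c ∈ (0,∞), depending only on α and β, such that for every Borel probability measure P on ℝ^m satisfying P(closed ball of center x and radius t) ≤ K·t^{β} for all x ∈ ℝ^m and all t ≥ 0, and for every integer n ≥ 2 and every L > 0, the n-fold product measure satisfies P^{(n)}({(x₁, …, xₙ) ∈ (ℝ^m)^n : Σ_{i=1}^{n−1} ‖x_{i+1} − x_i‖^{α} ≤ L}) ≤ (cK)^{n−1} · L^{(β/α)(n−1)}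 / ((n−1)^{(β/α − 1)(n−1)} · (n−1)!). -/
open MeasureTheory Metric Set
open scoped ENNReal

noncomputable section

lemma log_le_rpow_div {u e : ℝ} (hu : 0 < u) (he : 0 < e) : Real.log u ≤ u ^ e / e := by
  rw [le_div_iff₀ he, mul_comm]
  calc e * Real.log u = Real.log (u ^ e) := (Real.log_rpow hu e).symm
    _ ≤ u ^ e - 1 := Real.log_le_sub_one_of_pos (Real.rpow_pos_of_pos hu e)
    _ ≤ u ^ e := by linarith

lemma single_exp_bound {E : Type*} [NormedAddCommGroup E] [MeasurableSpace E] [BorelSpace E]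
    {α β K : ℝ} (hα : 0 < α) (hαβ : α < β) (hK : 0 ≤ K)
    (P : Measure E) [IsProbabilityMeasure P]
    (hP : ∀ (x : E) (t : ℝ), 0 ≤ t → P (Metric.closedBall x t) ≤ ENNReal.ofReal (K * t ^ β))
    {l : ℝ} (hl : 0 < l) (y : E) :
    ∫⁻ x, ENNReal.ofReal (Real.exp (-(l * ‖x - y‖ ^ α))) ∂P ≤
      ENNReal.ofReal (2 * (2 * (β / α)) ^ (β / α) * K * l ^ (-(β / α))) := by
  set γ : ℝ := β / α with hγdef
  have hγ : 1 < γ := (one_lt_div hα).2 hαβ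
  have hγ0 : 0 < γ := lt_trans one_pos hγ
  have hmeas : Measurable fun x : E => Real.exp (-(l * ‖x - y‖ ^ α)) := by
    fun_prop
  rw [lintegral_eq_lintegral_meas_lt P (Filter.Eventually.of_forall fun x => (Real.exp_pos _).le)
    hmeas.aemeasurable]
  set D : ℝ := (2 * γ) ^ γ * K * l ^ (-γ) with hDdef
  have hD : 0 ≤ D := by
    apply mul_nonneg (mul_nonneg (Real.rpow_nonneg (by positivity) _) hK)
    exact Real.rpow_nonneg hl.le _
  have key : ∀ t ∈ Ioi (0:ℝ), P {a | t < Real.exp (-(l * ‖a - y‖ ^ α))} ≤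
      Set.indicator (Ioo (0:ℝ) 1) (fun t => ENNReal.ofReal (D * t ^ (-(1/2) : ℝ))) t := by
    intro t ht
    simp only [mem_Ioi] at ht
    rcases lt_or_ge t 1 with h1 | h1
    · rw [Set.indicator_of_mem (Set.mem_Ioo.2 ⟨ht, h1⟩)]
      set r : ℝ := ((-Real.log t) / l) ^ (1/α) with hrdef
      have hlogt : 0 ≤ -Real.log t := neg_nonneg.2 (Real.log_nonpos ht.le h1.le)
      have hbase : 0 ≤ -Real.log t / l := div_nonneg hlogt hl.le
      have hr : 0 ≤ r := Real.rpow_nonneg hbase _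
      have hsub : {a : E | t < Real.exp (-(l * ‖a - y‖ ^ α))} ⊆ Metric.closedBall y r := by
        intro a ha
        simp only [mem_setOf_eq] at ha
        have h2 : Real.log t < -(l * ‖a - y‖ ^ α) := by
          have := Real.log_lt_log ht ha
          rwa [Real.log_exp] at this
        have h3 : ‖a - y‖ ^ α ≤ -Real.log t / l := by
          rw [le_div_iff₀ hl, mul_comm]
          nlinarith
        rw [Metric.mem_closedBall, dist_eq_norm]
        calc ‖a - y‖ = (‖a - y‖ ^ α) ^ (1/α) := by
              rw [← Real.rpow_mul (norm_nonneg _), mul_one_div, div_self hα.ne', Real.rpow_one]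
          _ ≤ r := Real.rpow_le_rpow (Real.rpow_nonneg (norm_nonneg _) _) h3 (by positivity)
      refine le_trans (measure_mono hsub) (le_trans (hP y r hr) (ENNReal.ofReal_le_ofReal ?_))
      have hrβ : r ^ β = (-Real.log t / l) ^ γ := by
        rw [hrdef, ← Real.rpow_mul hbase, one_div, inv_mul_eq_div]
      rw [hrβ]
      -- K * ((-log t)/l)^γ ≤ D * t^{-1/2}
      have hε : (0:ℝ) < 1 / (2*γ) := by positivity
      have hlog2 : -Real.log t ≤ (t⁻¹) ^ (1/(2*γ)) * (2*γ) := by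
        have := log_le_rpow_div (u := t⁻¹) (by positivity) hε
        rw [Real.log_inv] at this
        calc -Real.log t ≤ (t⁻¹) ^ (1/(2*γ)) / (1/(2*γ)) := this
          _ = (t⁻¹) ^ (1/(2*γ)) * (2*γ) := by rw [div_div_eq_mul_div, div_one, mul_comm]
      have hpow : (-Real.log t / l) ^ γ ≤ ((t⁻¹) ^ (1/(2*γ)) * (2*γ)) ^ γ * l ^ (-γ) := by
        rw [Real.div_rpow hlogt hl.le, Real.rpow_neg hl.le, div_eq_mul_inv]
        exact mul_le_mul_of_nonneg_right
          (Real.rpow_le_rpow hlogt hlog2 hγ0.le)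
          (inv_nonneg.2 (Real.rpow_nonneg hl.le _))
      have hsimp : ((t⁻¹) ^ (1/(2*γ)) * (2*γ)) ^ γ = t ^ (-(1/2):ℝ) * (2*γ) ^ γ := by
        have hexp : 1/(2*γ) * γ = (1:ℝ)/2 := by field_simp
        rw [Real.mul_rpow (Real.rpow_nonneg (by positivity) _) (by positivity),
          ← Real.rpow_mul (by positivity : (0:ℝ) ≤ t⁻¹), hexp,
          Real.inv_rpow ht.le, ← Real.rpow_neg ht.le]
      calc K * (-Real.log t / l) ^ γ ≤ K * (t ^ (-(1/2):ℝ) * (2*γ) ^ γ * l ^ (-γ)) := by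
            rw [← hsimp]; exact mul_le_mul_of_nonneg_left hpow hK
        _ = D * t ^ (-(1/2):ℝ) := by rw [hDdef]; ring
    · rw [Set.indicator_of_notMem (fun h => absurd h.2 (not_lt.2 h1))]
      have : {a : E | t < Real.exp (-(l * ‖a - y‖ ^ α))} = ∅ := by
        ext a
        simp only [mem_setOf_eq, mem_empty_iff_false, iff_false, not_lt]
        calc Real.exp (-(l * ‖a - y‖ ^ α)) ≤ Real.exp 0 := by
              apply Real.exp_le_exp.2
              have hs : 0 ≤ ‖a - y‖ ^ α := Real.rpow_nonneg (norm_nonneg _) _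
              nlinarith
          _ = 1 := Real.exp_zero
          _ ≤ t := h1
      rw [this, measure_empty]
  have hi : IntervalIntegrable (fun t : ℝ => t ^ (-(1/2) : ℝ)) volume 0 1 :=
    intervalIntegral.intervalIntegrable_rpow' (by norm_num)
  have hint : IntegrableOn (fun t : ℝ => D * t ^ (-(1/2) : ℝ)) (Ioo (0:ℝ) 1) volume := by
    refine Integrable.const_mul ?_ D
    exact (((intervalIntegrable_iff_integrableOn_Ioc_of_le (by norm_num)).1 hi).mono_set
      Ioo_subset_Ioc_self)
  have hnn : 0 ≤ᵐ[volume.restrict (Ioo (0:ℝ) 1)] fun t : ℝ => D * t ^ (-(1/2) : ℝ) := by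
    rw [Filter.EventuallyLE, ae_restrict_iff' measurableSet_Ioo]
    exact Filter.Eventually.of_forall fun t ht =>
      mul_nonneg hD (Real.rpow_nonneg ht.1.le _)
  have hval : ∫ t in Ioo (0:ℝ) 1, D * t ^ (-(1/2) : ℝ) = D * 2 := by
    rw [integral_const_mul]
    congr 1
    rw [← MeasureTheory.integral_Ioc_eq_integral_Ioo,
      ← intervalIntegral.integral_of_le (by norm_num : (0:ℝ) ≤ 1),
      integral_rpow (Or.inl (by norm_num))]
    norm_num
  calc ∫⁻ t in Ioi (0:ℝ), P {a | t < Real.exp (-(l * ‖a - y‖ ^ α))}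
      ≤ ∫⁻ t in Ioi (0:ℝ),
        Set.indicator (Ioo (0:ℝ) 1) (fun t => ENNReal.ofReal (D * t ^ (-(1/2):ℝ))) t :=
        setLIntegral_mono' measurableSet_Ioi key
    _ = ∫⁻ t in Ioo (0:ℝ) 1, ENNReal.ofReal (D * t ^ (-(1/2):ℝ)) := by
        rw [lintegral_indicator measurableSet_Ioo, Measure.restrict_restrict measurableSet_Ioo,
          inter_eq_self_of_subset_left Ioo_subset_Ioi_self]
    _ = ENNReal.ofReal (∫ t in Ioo (0:ℝ) 1, D * t ^ (-(1/2):ℝ)) :=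
        (ofReal_integral_eq_lintegral_ofReal hint hnn).symm
    _ ≤ ENNReal.ofReal (2 * (2 * γ) ^ γ * K * l ^ (-γ)) := by
        rw [hval]
        exact ENNReal.ofReal_le_ofReal (le_of_eq (by rw [hDdef]; ring))

lemma prod_integral_bound {E : Type*} [MeasurableSpace E]
    (P : Measure E) [IsProbabilityMeasure P]
    (f : E → E → ℝ≥0∞) (hf : Measurable fun p : E × E => f p.1 p.2)
    (M : ℝ≥0∞) (hM : ∀ y : E, ∫⁻ x, f x y ∂P ≤ M) :
    ∀ n : ℕ, ∫⁻ x : Fin (n+1) → E, ∏ i : Fin n, f (x i.succ) (x i.castSucc)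
      ∂(Measure.pi fun _ => P) ≤ M ^ n := by
  intro n
  induction n with
  | zero => simp
  | succ n ih =>
    set e := MeasurableEquiv.piFinSuccAbove (fun _ : Fin (n+2) => E) (Fin.last (n+1)) with he
    have hpres := measurePreserving_piFinSuccAbove (fun _ : Fin (n+2) => P) (Fin.last (n+1))
    have hGmeas : Measurable fun x : Fin (n+2) → E =>
        ∏ i : Fin (n+1), f (x i.succ) (x i.castSucc) :=
      Finset.measurable_prod _ fun i _ => by
        exact Measurable.comp (f := fun x : Fin (n+2) → E => (x i.succ, x i.castSucc)) hf
          ((measurable_pi_apply _).prodMk (measurable_pi_apply _))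
    have hprodmeas : ∀ (k : ℕ), Measurable fun y : Fin (k+1) → E =>
        ∏ i : Fin k, f (y i.succ) (y i.castSucc) := fun k =>
      Finset.measurable_prod _ fun i _ => by
        exact Measurable.comp (f := fun x : Fin (k+1) → E => (x i.succ, x i.castSucc)) hf
          ((measurable_pi_apply _).prodMk (measurable_pi_apply _))
    have hfy : ∀ c : E, Measurable fun a : E => f a c := fun c => by
      exact Measurable.comp (f := fun a : E => (a, c)) hf (measurable_id.prodMk measurable_const)
    have hGe : Measurable fun z : E × (Fin (n+1) → E) =>
        ∏ i : Fin (n+1), f (e.symm z i.succ) (e.symm z i.castSucc) := by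
      exact hGmeas.comp e.symm.measurable
    have hkey : ∀ (a : E) (y : Fin (n+1) → E),
        (∏ i : Fin (n+1), f (e.symm (a, y) i.succ) (e.symm (a, y) i.castSucc)) =
        (∏ i : Fin n, f (y i.succ) (y i.castSucc)) * f a (y (Fin.last n)) := by
      intro a y
      have hxl : e.symm (a, y) (Fin.last (n+1)) = a := by
        simp [he, MeasurableEquiv.piFinSuccAbove]
      have hxc : ∀ j : Fin (n+1), e.symm (a, y) j.castSucc = y j := by
        intro j
        have : j.castSucc = (Fin.last (n+1)).succAbove j := by
          rw [Fin.succAbove_last]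
        rw [this]
        simp [he, MeasurableEquiv.piFinSuccAbove]
      rw [Fin.prod_univ_castSucc]
      congr 1
      · refine Finset.prod_congr rfl fun i _ => ?_
        rw [Fin.succ_castSucc, hxc, hxc]
      · rw [Fin.succ_last, hxl, hxc]
    calc ∫⁻ x : Fin (n+2) → E, ∏ i : Fin (n+1), f (x i.succ) (x i.castSucc)
          ∂(Measure.pi fun _ => P)
        = ∫⁻ z : E × (Fin (n+1) → E),
            ∏ i : Fin (n+1), f (e.symm z i.succ) (e.symm z i.castSucc)
            ∂(P.prod (Measure.pi fun _ => P)) := by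
          exact ((hpres.symm e).lintegral_comp hGmeas).symm
      _ = ∫⁻ y : Fin (n+1) → E, ∫⁻ a : E,
            (∏ i : Fin n, f (y i.succ) (y i.castSucc)) * f a (y (Fin.last n))
            ∂P ∂(Measure.pi fun _ => P) := by
          rw [lintegral_prod_symm _ hGe.aemeasurable]
          exact lintegral_congr fun y => lintegral_congr fun a => by rw [hkey]
      _ ≤ ∫⁻ y : Fin (n+1) → E,
            (∏ i : Fin n, f (y i.succ) (y i.castSucc)) * M ∂(Measure.pi fun _ => P) := by
          refine lintegral_mono fun y => ?_
          rw [lintegral_const_mul _ (hfy _)]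
          exact mul_le_mul_right (hM _) _
      _ ≤ M ^ n * M := by
          rw [lintegral_mul_const _ (hprodmeas n)]
          exact mul_le_mul_left ih _
      _ = M ^ (n+1) := (pow_succ M n).symm

/-- The `n`-fold product measure `P^{(n)}` on `(ℝ^m)^n`. -/
def prodMeasure {m : ℕ} (n : ℕ) (P : Measure (EuclideanSpace ℝ (Fin m))) :
    Measure (Fin n → EuclideanSpace ℝ (Fin m)) :=
  Measure.pi fun _ => P

/-- The sum `Σ_{i=1}^{n-1} ‖x_{i+1} - x_i‖^α` of `α`-th powers (real exponent)
of the lengths of consecutive increments. -/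
def pathRPowLength {E : Type*} [NormedAddCommGroup E] (α : ℝ) {n : ℕ}
    (x : Fin n → E) : ℝ :=
  ∑ i : Fin n, if h : (i : ℕ) + 1 < n then ‖x ⟨(i : ℕ) + 1, h⟩ - x i‖ ^ α else 0

lemma pathRPowLength_eq {E : Type*} [NormedAddCommGroup E] (α : ℝ) (N : ℕ)
    (x : Fin (N+1) → E) :
    pathRPowLength α x = ∑ i : Fin N, ‖x i.succ - x i.castSucc‖ ^ α := by
  rw [pathRPowLength, Fin.sum_univ_castSucc]
  have hlast : (if h : ((Fin.last N : Fin (N+1)) : ℕ) + 1 < N + 1 then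
      ‖x ⟨((Fin.last N : Fin (N+1)) : ℕ) + 1, h⟩ - x (Fin.last N)‖ ^ α else 0) = 0 := by
    rw [dif_neg]; simp [Fin.last]
  rw [hlast, add_zero]
  refine Finset.sum_congr rfl fun i _ => ?_
  have hlt : ((i.castSucc : Fin (N+1)) : ℕ) + 1 < N + 1 := by
    simp only [Fin.coe_castSucc]; omega
  rw [dif_pos hlt]
  have heq : (⟨((i.castSucc : Fin (N+1)) : ℕ) + 1, hlt⟩ : Fin (N+1)) = i.succ :=
    Fin.ext (by simp)
  rw [heq]

/-- Abstract chaining tail bound for consecutive-increment sums (core of the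
proof of Lemma 3.1): for `0 < α < β` there is a constant `c > 0` depending only
on `α, β` such that for every probability measure `P` on `ℝ^m` with
`P(closedBall x t) ≤ K t^β` for all `x` and `t ≥ 0`, every `n ≥ 2` and `L > 0`,
`P^{(n)}(Σ_{i=1}^{n-1} ‖x_{i+1} - x_i‖^α ≤ L) ≤
  (cK)^{n-1} L^{(β/α)(n-1)} / ((n-1)^{(β/α - 1)(n-1)} (n-1)!)`. -/
theorem chaining_tail_bound
    (m : ℕ) (hm : 1 ≤ m) (α β K : ℝ)
    (hα : 0 < α) (hαβ : α < β) (hK : 0 ≤ K) :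
    ∃ c : ℝ, 0 < c ∧
      ∀ P : Measure (EuclideanSpace ℝ (Fin m)), IsProbabilityMeasure P →
        (∀ (x : EuclideanSpace ℝ (Fin m)) (t : ℝ), 0 ≤ t →
          P (Metric.closedBall x t) ≤ ENNReal.ofReal (K * t ^ β)) →
        ∀ n : ℕ, 2 ≤ n → ∀ L : ℝ, 0 < L →
          prodMeasure n P {x | pathRPowLength α x ≤ L} ≤
            ENNReal.ofReal ((c * K) ^ (n - 1) *
              L ^ ((β / α) * ((n : ℝ) - 1)) /
              (((n : ℝ) - 1) ^ ((β / α - 1) * ((n : ℝ) - 1)) *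
                (Nat.factorial (n - 1) : ℝ))) := by
  have hγ : 1 < β / α := (one_lt_div hα).2 hαβ
  have hγ0 : 0 < β / α := lt_trans one_pos hγ
  set γ : ℝ := β / α with hγdef
  set c : ℝ := 2 * Real.exp γ * 2 ^ γ with hcdef
  have hc : 0 < c := by positivity
  refine ⟨c, hc, ?_⟩
  intro P hPprob hP n hn L hL
  haveI := hPprob
  obtain ⟨N, rfl⟩ : ∃ N, n = N + 1 := ⟨n - 1, by omega⟩
  have hN : 1 ≤ N := by omega
  have hN'0 : (0:ℝ) < N := by exact_mod_cast hN
  set E := EuclideanSpace ℝ (Fin m)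
  set l : ℝ := γ * N / L with hldef
  have hlpos : 0 < l := by positivity
  set C : ℝ := 2 * (2 * γ) ^ γ with hCdef
  have hC : 0 < C := by positivity
  set f : E → E → ℝ≥0∞ := fun a b => ENNReal.ofReal (Real.exp (-(l * ‖a - b‖ ^ α))) with hfdef
  have hfmeas : Measurable fun p : E × E => f p.1 p.2 := by
    apply Measurable.ennreal_ofReal
    fun_prop
  have hM : ∀ y : E, ∫⁻ x, f x y ∂P ≤ ENNReal.ofReal (C * K * l ^ (-γ)) := fun y =>
    single_exp_bound hα hαβ hK P hP hlpos y
  have hbound := prod_integral_bound P f hfmeas _ hM N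
  have hGmeas : Measurable fun x : Fin (N+1) → E =>
      ∏ i : Fin N, f (x i.succ) (x i.castSucc) :=
    Finset.measurable_prod _ fun i _ => by
      exact Measurable.comp (f := fun x : Fin (N+1) → E => (x i.succ, x i.castSucc)) hfmeas
        ((measurable_pi_apply _).prodMk (measurable_pi_apply _))
  -- Chernoff step
  have hchern : prodMeasure (N+1) P {x | pathRPowLength α x ≤ L} ≤
      ENNReal.ofReal (Real.exp (l * L)) * (ENNReal.ofReal (C * K * l ^ (-γ))) ^ N := by
    have hpoint : ∀ x ∈ {x : Fin (N+1) → E | pathRPowLength α x ≤ L},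
        (1 : ℝ≥0∞) ≤ ENNReal.ofReal (Real.exp (l * L)) *
          ∏ i : Fin N, f (x i.succ) (x i.castSucc) := by
      intro x hx
      simp only [mem_setOf_eq] at hx
      have hprod : (∏ i : Fin N, f (x i.succ) (x i.castSucc)) =
          ENNReal.ofReal (Real.exp (-(l * pathRPowLength α x))) := by
        rw [hfdef, ← ENNReal.ofReal_prod_of_nonneg (fun i _ => (Real.exp_pos _).le),
          ← Real.exp_sum, pathRPowLength_eq]
        congr 1
        rw [Finset.mul_sum, ← Finset.sum_neg_distrib]
      rw [hprod, ← ENNReal.ofReal_mul (Real.exp_pos _).le, ← Real.exp_add]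
      calc (1:ℝ≥0∞) = ENNReal.ofReal (Real.exp 0) := by simp
        _ ≤ ENNReal.ofReal (Real.exp (l * L + -(l * pathRPowLength α x))) := by
            apply ENNReal.ofReal_le_ofReal
            apply Real.exp_le_exp.2
            nlinarith
    calc prodMeasure (N+1) P {x | pathRPowLength α x ≤ L}
        = ∫⁻ x in {x : Fin (N+1) → E | pathRPowLength α x ≤ L}, 1
            ∂(prodMeasure (N+1) P) := (setLIntegral_one _).symm
      _ ≤ ∫⁻ x in {x : Fin (N+1) → E | pathRPowLength α x ≤ L},
            ENNReal.ofReal (Real.exp (l * L)) * ∏ i : Fin N, f (x i.succ) (x i.castSucc)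
            ∂(prodMeasure (N+1) P) :=
          setLIntegral_mono (Measurable.const_mul hGmeas _) hpoint
      _ ≤ ∫⁻ x, ENNReal.ofReal (Real.exp (l * L)) * ∏ i : Fin N, f (x i.succ) (x i.castSucc)
            ∂(prodMeasure (N+1) P) := setLIntegral_le_lintegral _ _
      _ = ENNReal.ofReal (Real.exp (l * L)) *
            ∫⁻ x, ∏ i : Fin N, f (x i.succ) (x i.castSucc) ∂(prodMeasure (N+1) P) :=
          lintegral_const_mul _ hGmeas
      _ ≤ ENNReal.ofReal (Real.exp (l * L)) * (ENNReal.ofReal (C * K * l ^ (-γ))) ^ N :=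
          mul_le_mul_right hbound _
  refine le_trans hchern ?_
  -- numeric part
  have hCKl : 0 ≤ C * K * l ^ (-γ) := by positivity
  rw [← ENNReal.ofReal_pow hCKl, ← ENNReal.ofReal_mul (Real.exp_pos _).le]
  apply ENNReal.ofReal_le_ofReal
  -- real inequality
  set N' : ℝ := (N : ℝ) with hN'def
  have hcast1 : ((N + 1 : ℕ) : ℝ) - 1 = N' := by push_cast; ring
  have hcast2 : N + 1 - 1 = N := by omega
  rw [hcast1, hcast2]
  have hlL : l * L = γ * N' := by rw [hldef]; field_simp
  have hlinv : l ^ (-γ) = L ^ γ / (γ ^ γ * N' ^ γ) := by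
    rw [hldef, Real.rpow_neg (by positivity), Real.div_rpow (by positivity) hL.le,
      Real.mul_rpow hγ0.le hN'0.le]
    rw [inv_div]
  have hstep1 : Real.exp (l * L) * (C * K * l ^ (-γ)) ^ N = (c * K * L ^ γ / N' ^ γ) ^ N := by
    rw [hlL, hlinv, mul_comm γ N', Real.exp_nat_mul, ← mul_pow]
    congr 1
    have h2γ : (2 * γ) ^ γ = 2 ^ γ * γ ^ γ := Real.mul_rpow (by norm_num) hγ0.le
    rw [hcdef, hCdef, h2γ]
    have hγγ : (0:ℝ) < γ ^ γ := Real.rpow_pos_of_pos hγ0 _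
    have hNγ : (0:ℝ) < N' ^ γ := Real.rpow_pos_of_pos hN'0 _
    field_simp
  rw [hstep1]
  have hfact : (Nat.factorial N : ℝ) ≤ N' ^ N' := by
    rw [hN'def, Real.rpow_natCast]
    exact_mod_cast N.factorial_le_pow
  have hfact0 : (0:ℝ) < (Nat.factorial N : ℝ) := by exact_mod_cast N.factorial_pos
  have hdenom : N' ^ ((γ - 1) * N') * (Nat.factorial N : ℝ) ≤ N' ^ (γ * N') := by
    calc N' ^ ((γ - 1) * N') * (Nat.factorial N : ℝ) ≤ N' ^ ((γ - 1) * N') * N' ^ N' :=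
          mul_le_mul_of_nonneg_left hfact (Real.rpow_nonneg hN'0.le _)
      _ = N' ^ (γ * N') := by rw [← Real.rpow_add hN'0]; ring_nf
  have hLHS : (c * K * L ^ γ / N' ^ γ) ^ N = (c * K) ^ N * L ^ (γ * N') / N' ^ (γ * N') := by
    rw [div_pow, mul_pow, ← Real.rpow_natCast (L ^ γ) N, ← Real.rpow_natCast (N' ^ γ) N,
      ← Real.rpow_mul hL.le, ← Real.rpow_mul hN'0.le]
  rw [hLHS]
  apply div_le_div_of_nonneg_left ?_ ?_ hdenom
  · positivity
  · positivity

end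
end

section
/- Traveling-salesman bound on a one-dimensional manifold (Lemma 3.2 for d₁ = 1): Let M ⊆ ℝ^m be a compact connected topological 1-manifold with boundary with H¹(M) < ∞, and let X₁, …, Xₙ ∈ M. Then there exists a permutation σ of {1, …, n} such that Σ_{i=1}^{n−1} ‖X_{σ(i+1)} − X_{σ(i)}‖ ≤ H¹(M). -/
/-!
Connectedness and the half-line charts make `M` arc-connected. A one-dimensional manifold does
not branch (an arc is a neighbourhood of its interior points), so an arc from a point `p` that
meets a given arc for the first time does so at an endpoint; gluing the two gives an arc through
`p` as well, and by induction there is an arc through all the `Xᵢ`. Ordered along this arc, the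
points cut it into sub-arcs that overlap only at single points, and a connected set has `H¹` at
least the distance between any two of its points (its image under `dist · y` contains an interval
of that length). Summing, the length of the ordered path is at most `H¹` of the arc, hence of `M`.
-/

open MeasureTheory Metric Set

noncomputable section

/-- The length `Σ_{i=1}^{n-1} ‖x_{i+1} - x_i‖` of the polygonal path through
`x_1, …, x_n`. -/
def pathLength {E : Type*} [NormedAddCommGroup E] {n : ℕ}
    (x : Fin n → E) : ℝ :=
  ∑ i : Fin n, if h : (i : ℕ) + 1 < n then ‖x ⟨(i : ℕ) + 1, h⟩ - x i‖ else 0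

open Filter Topology

/-- Arcs are parametrised by maps continuous on all of `ℝ`: any arc on `[a, b]` extends to one,
and concatenation then stays continuous without case analysis. -/
structure IsArc {X : Type*} [TopologicalSpace X] (f : ℝ → X) (a b : ℝ) : Prop where
  le : a ≤ b
  continuous : Continuous f
  injOn : InjOn f (Icc a b)

def JoinedByArc {X : Type*} [TopologicalSpace X] (x y : X) : Prop :=
  ∃ f a b, IsArc f a b ∧ f a = x ∧ f b = y

theorem image_reverse {X : Type*} (f : ℝ → X) (a b : ℝ) :
    (fun t => f (a + b - t)) '' Icc a b = f '' Icc a b := by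
  rw [← image_image f (fun t => a + b - t), image_const_sub_Icc]
  simp

section Arc

variable {X : Type*} [TopologicalSpace X] {f g : ℝ → X} {a b c d : ℝ}

theorem isArc_const (x : X) (a : ℝ) : IsArc (fun _ => x) a a :=
  ⟨le_rfl, continuous_const, by simp [InjOn]⟩

theorem IsArc.mono (hf : IsArc f a b) (hac : a ≤ c) (hcd : c ≤ d) (hdb : d ≤ b) :
    IsArc f c d :=
  ⟨hcd, hf.continuous, hf.injOn.mono (Icc_subset_Icc hac hdb)⟩

theorem IsArc.comp {Y : Type*} [TopologicalSpace Y] {φ : X → Y} (hφ : Continuous φ)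
    (hφ' : Function.Injective φ) (hf : IsArc f a b) : IsArc (φ ∘ f) a b :=
  ⟨hf.le, hφ.comp hf.continuous, hφ'.comp_injOn hf.injOn⟩

theorem IsArc.isCompact_image (hf : IsArc f a b) : IsCompact (f '' Icc a b) :=
  isCompact_Icc.image hf.continuous

theorem IsArc.reverse (hf : IsArc f a b) : IsArc (fun t => f (a + b - t)) a b := by
  refine ⟨hf.le, hf.continuous.comp (by fun_prop), fun s hs t ht hst => ?_⟩
  have := hf.injOn ⟨by linarith [hs.2], by linarith [hs.1]⟩
    ⟨by linarith [ht.2], by linarith [ht.1]⟩ hst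
  linarith

theorem JoinedByArc.symm {x y : X} (h : JoinedByArc x y) : JoinedByArc y x := by
  obtain ⟨f, a, b, hf, rfl, rfl⟩ := h
  exact ⟨_, a, b, hf.reverse, by simp, by simp⟩

theorem joinedByArc_of_injOn {p q : ℝ} (hg : ContinuousOn g (uIcc p q))
    (hinj : InjOn g (uIcc p q)) : JoinedByArc (g p) (g q) := by
  wlog hpq : p ≤ q generalizing p q
  · rw [uIcc_comm] at hg hinj
    exact (this hg hinj (le_of_not_ge hpq)).symm
  rw [uIcc_of_le hpq] at hg hinj
  have hproj : Continuous fun t => (projIcc p q hpq t : ℝ) :=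
    continuous_subtype_val.comp continuous_projIcc
  refine ⟨fun t => g (projIcc p q hpq t), p, q,
    ⟨hpq, hg.comp_continuous hproj fun t => (projIcc p q hpq t).2, ?_⟩, by simp, by simp⟩
  intro s hs t ht hst
  simp only [projIcc_of_mem hpq hs, projIcc_of_mem hpq ht] at hst
  exact hinj hs ht hst

theorem IsArc.append (hf : IsArc f a b) (hg : IsArc g c d) (hfg : f b = g c)
    (hdisj : ∀ t ∈ Ico a b, f t ∉ g '' Icc c d) :
    ∃ h a' b', IsArc h a' b' ∧ h a' = f a ∧ h b' = g d ∧
      h '' Icc a' b' = f '' Icc a b ∪ g '' Icc c d := by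
  classical
  set h : ℝ → X := fun t => if t ≤ b then f t else g (t + (c - b))
  have hbd : b ≤ b + (d - c) := by linarith [hg.le]
  have hleft : ∀ t ≤ b, h t = f t := fun t ht => if_pos ht
  have hright : ∀ t ∈ Icc b (b + (d - c)), h t = g (t + (c - b)) := by
    intro t ht
    rcases ht.1.eq_or_lt with rfl | hbt
    · simp [h, hfg]
    · simp [h, not_le.2 hbt]
  have hcross : ∀ s ∈ Icc a b, ∀ t ∈ Ioc b (b + (d - c)), h s ≠ h t := by
    intro s hs t ht hst
    rw [hright t ⟨ht.1.le, ht.2⟩, hleft s hs.2] at hst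
    have ht' : t + (c - b) ∈ Icc c d := ⟨by linarith [ht.1], by linarith [ht.2]⟩
    rcases hs.2.lt_or_eq with hsb | rfl
    · exact hdisj s ⟨hs.1, hsb⟩ ⟨_, ht', hst.symm⟩
    · have := hg.injOn (left_mem_Icc.2 hg.le) ht' (hfg ▸ hst)
      linarith [ht.1]
  refine ⟨h, a, b + (d - c), ⟨hf.le.trans hbd, ?_, ?_⟩, hleft a hf.le, ?_, ?_⟩
  · exact Continuous.if_le hf.continuous (hg.continuous.comp (by fun_prop)) continuous_id
      continuous_const fun t ht => by simp [ht, hfg]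
  · intro s hs t ht hst
    rcases le_or_gt s b with hsb | hbs <;> rcases le_or_gt t b with htb | hbt
    · rw [hleft s hsb, hleft t htb] at hst
      exact hf.injOn ⟨hs.1, hsb⟩ ⟨ht.1, htb⟩ hst
    · exact absurd hst (hcross s ⟨hs.1, hsb⟩ t ⟨hbt, ht.2⟩)
    · exact absurd hst.symm (hcross t ⟨ht.1, htb⟩ s ⟨hbs, hs.2⟩)
    · rw [hright s ⟨hbs.le, hs.2⟩, hright t ⟨hbt.le, ht.2⟩] at hst
      have := hg.injOn ⟨by linarith, by linarith [hs.2]⟩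
        ⟨by linarith, by linarith [ht.2]⟩ hst
      linarith
  · rw [hright _ ⟨hbd, le_rfl⟩]
    congr 1
    ring
  · have himage : h '' Icc b (b + (d - c)) = g '' Icc c d := by
      rw [image_congr hright, ← image_image g (· + (c - b)), image_add_const_Icc]
      congr 2 <;> ring
    rw [← Icc_union_Icc_eq_Icc hf.le hbd, image_union, himage,
      image_congr fun t ht => hleft t ht.2]

end Arc

theorem Continuous.exists_first_mem {X : Type*} [TopologicalSpace X] {β : ℝ → X} {a b : ℝ}
    {K : Set X} (hβ : Continuous β) (hab : a ≤ b) (hK : IsClosed K) (hb : β b ∈ K) :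
    ∃ t ∈ Icc a b, β t ∈ K ∧ ∀ s ∈ Ico a t, β s ∉ K := by
  set T := Icc a b ∩ β ⁻¹' K
  have hbdd : BddBelow T := ⟨a, fun t ht => ht.1.1⟩
  obtain ⟨hmem, hK'⟩ : sInf T ∈ T :=
    (isClosed_Icc.inter (hK.preimage hβ)).csInf_mem ⟨b, ⟨hab, le_rfl⟩, hb⟩ hbdd
  exact ⟨sInf T, hmem, hK', fun s hs hsK =>
    hs.2.not_ge (csInf_le hbdd ⟨⟨hs.1, hs.2.le.trans hmem.2⟩, hsK⟩)⟩

section HalfLineCharts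

variable {X : Type*} [TopologicalSpace X] [ChartedSpace (Ici (0 : ℝ)) X]

theorem eventually_joinedByArc (x : X) : ∀ᶠ y in 𝓝 x, JoinedByArc y x := by
  set e := chartAt (Ici (0 : ℝ)) x
  have hx := mem_chart_source (Ici (0 : ℝ)) x
  have hproj : Continuous (projIci (0 : ℝ)) :=
    (continuous_const.max continuous_id).subtype_mk _
  obtain ⟨ε, hε, hball⟩ :
      ∃ ε > 0, ∀ r : ℝ, dist r (e x) < ε → projIci 0 r ∈ e.target := by
    refine Metric.eventually_nhds_iff.1 (hproj.continuousAt.preimage_mem_nhds ?_)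
    rw [projIci_of_mem (e x).2]
    exact e.open_target.mem_nhds (e.map_source hx)
  have hcont : ContinuousAt (fun y => (e y : ℝ)) x :=
    continuous_subtype_val.continuousAt.comp (e.continuousAt hx)
  filter_upwards [e.open_source.mem_nhds hx, hcont.eventually (Metric.ball_mem_nhds _ hε)]
    with y hy hyx
  set g : ℝ → X := fun r => e.symm (projIci 0 r)
  have hseg : ∀ r ∈ uIcc (e y : ℝ) (e x), projIci 0 r ∈ e.target ∧ r ∈ Ici 0 := by
    intro r hr
    refine ⟨hball r ?_, le_trans (le_min (e y).2 (e x).2) hr.1⟩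
    rw [Real.dist_eq, abs_sub_comm]
    exact (abs_sub_right_of_mem_uIcc hr).trans_lt (by rwa [abs_sub_comm])
  have hgy : g (e y) = y := by simp [g, projIci_of_mem (e y).2, e.left_inv hy]
  have hgx : g (e x) = x := by simp [g, projIci_of_mem (e x).2, e.left_inv hx]
  rw [← hgy, ← hgx]
  refine joinedByArc_of_injOn
    (e.continuousOn_symm.comp hproj.continuousOn fun r hr => (hseg r hr).1) ?_
  intro r hr s hs hrs
  have := congrArg Subtype.val (e.symm.injOn (hseg r hr).1 (hseg s hs).1 hrs)
  simpa [projIci_of_mem (hseg r hr).2, projIci_of_mem (hseg s hs).2] using this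

theorem IsArc.image_mem_nhds {α : ℝ → X} {a b s : ℝ} (hα : IsArc α a b)
    (hs : s ∈ Ioo a b) : α '' Icc a b ∈ 𝓝 (α s) := by
  set e := chartAt (Ici (0 : ℝ)) (α s)
  have hαs := mem_chart_source (Ici (0 : ℝ)) (α s)
  obtain ⟨p, q, -, hJ, hJsub⟩ := exists_Icc_mem_subset_of_mem_nhds <| inter_mem
    (Ioo_mem_nhds hs.1 hs.2) (hα.continuous.continuousAt.preimage_mem_nhds
      (e.open_source.mem_nhds hαs))
  have hspq : s ∈ Ioo p q := Icc_mem_nhds_iff.1 hJ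
  have hpq : p ≤ q := (hspq.1.trans hspq.2).le
  have hJab : Icc p q ⊆ Icc a b := fun t ht => Ioo_subset_Icc_self (hJsub ht).1
  set φ : X → ℝ := fun y => e y
  have hφ : ContinuousOn φ e.source := continuous_subtype_val.comp_continuousOn e.continuousOn
  have hφinj : InjOn φ e.source := fun y hy z hz h => e.injOn hy hz (Subtype.ext h)
  -- In the chart, `α` near `s` is a continuous injective real function, hence strictly monotone,
  -- so its image contains an open interval around `φ (α s)`.
  have hψc : ContinuousOn (φ ∘ α) (Icc p q) :=
    hφ.comp hα.continuous.continuousOn fun t ht => (hJsub ht).2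
  have hψi : InjOn (φ ∘ α) (Icc p q) :=
    fun t ht u hu h => hα.injOn (hJab ht) (hJab hu) (hφinj (hJsub ht).2 (hJsub hu).2 h)
  set O := Ioo (min (φ (α p)) (φ (α q))) (max (φ (α p)) (φ (α q)))
  have hsO : φ (α s) ∈ O := by
    have hp : p ∈ Icc p q := left_mem_Icc.2 hpq
    have hq : q ∈ Icc p q := right_mem_Icc.2 hpq
    rcases ContinuousOn.strictMonoOn_of_injOn_Icc' hpq hψc hψi with h | h
    · exact ⟨(min_le_left _ _).trans_lt (h hp (Ioo_subset_Icc_self hspq) hspq.1),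
        (h (Ioo_subset_Icc_self hspq) hq hspq.2).trans_le (le_max_right _ _)⟩
    · exact ⟨(min_le_right _ _).trans_lt (h (Ioo_subset_Icc_self hspq) hq hspq.2),
        (h hp (Ioo_subset_Icc_self hspq) hspq.1).trans_le (le_max_left _ _)⟩
  have hOsub : O ⊆ (φ ∘ α) '' Icc p q := by
    rw [← uIcc_of_le hpq] at hψc ⊢
    exact Ioo_subset_Icc_self.trans (intermediate_value_uIcc (f := φ ∘ α) hψc)
  refine Filter.mem_of_superset
    ((hφ.isOpen_inter_preimage e.open_source isOpen_Ioo).mem_nhds ⟨hαs, hsO⟩) ?_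
  rintro y ⟨hy, hyO⟩
  obtain ⟨t, ht, hty⟩ := hOsub hyO
  exact ⟨t, hJab ht, hφinj (hJsub ht).2 hy hty⟩

end HalfLineCharts

section ArcConnected

variable {X : Type*} [TopologicalSpace X] [T2Space X]

theorem JoinedByArc.trans {x y z : X} (hxy : JoinedByArc x y) (hyz : JoinedByArc y z) :
    JoinedByArc x z := by
  obtain ⟨β, a, b, hβ, rfl, rfl⟩ := hxy
  obtain ⟨γ, c, d, hγ, hγc, rfl⟩ := hyz
  obtain ⟨t, ht, ⟨r, hr, hrt⟩, hfirst⟩ := hβ.continuous.exists_first_mem hβ.le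
    hγ.isCompact_image.isClosed ⟨c, left_mem_Icc.2 hγ.le, hγc⟩
  obtain ⟨h, a', b', hh, hha, hhb, -⟩ := (hβ.mono le_rfl ht.1 ht.2).append
    (hγ.mono hr.1 hr.2 le_rfl) hrt.symm
    fun s hs hmem => hfirst s hs (image_mono (Icc_subset_Icc_left hr.1) hmem)
  exact ⟨h, a', b', hh, hha, hhb⟩

variable [PreconnectedSpace X] [ChartedSpace (Ici (0 : ℝ)) X]

theorem joinedByArc (x y : X) : JoinedByArc x y :=
  PreconnectedSpace.induction₂' _
    (fun x => (eventually_joinedByArc x).mono fun _ h => ⟨h.symm, h⟩)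
    ⟨fun _ _ _ => JoinedByArc.trans⟩ x y

theorem IsArc.exists_insert_subset_image {α : ℝ → X} {a b : ℝ} (hα : IsArc α a b) (p : X) :
    ∃ f c d, IsArc f c d ∧ insert p (α '' Icc a b) ⊆ f '' Icc c d := by
  by_cases hp : p ∈ α '' Icc a b
  · exact ⟨α, a, b, hα, insert_subset hp subset_rfl⟩
  obtain ⟨β, c, d, hβ, rfl, hβd⟩ := joinedByArc p (α a)
  obtain ⟨t, ht, ⟨s, hs, hst⟩, hfirst⟩ := hβ.continuous.exists_first_mem hβ.le
    hα.isCompact_image.isClosed ⟨a, left_mem_Icc.2 hα.le, hβd.symm⟩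
  have hct : c < t := ht.1.lt_of_ne fun hct => hp (hct ▸ ⟨s, hs, hst⟩)
  -- `β` reaches `α '' Icc a b` from outside, which is impossible at an interior point of `α`.
  have hs' : s = a ∨ s = b := by
    by_contra! hne
    have hK := hα.image_mem_nhds ⟨hs.1.lt_of_ne hne.1.symm, hs.2.lt_of_ne hne.2⟩
    rw [hst] at hK
    have hβt : Tendsto β (𝓝[<] t) (𝓝 (β t)) :=
      (hβ.continuous.tendsto t).mono_left nhdsWithin_le_nhds
    obtain ⟨u, hu, hu'⟩ := ((hβt.eventually hK).and (Ioo_mem_nhdsLT hct)).exists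
    exact hfirst u ⟨hu'.1.le, hu'.2⟩ hu
  obtain ⟨α', hα', hα's, himage⟩ :
      ∃ α' : ℝ → X, IsArc α' a b ∧ α' a = α s ∧ α' '' Icc a b = α '' Icc a b := by
    rcases hs' with rfl | rfl
    · exact ⟨α, hα, rfl, rfl⟩
    · exact ⟨_, hα.reverse, by simp, image_reverse α _ _⟩
  obtain ⟨f, c', d', hf, -, -, hfimage⟩ := (hβ.mono le_rfl ht.1 ht.2).append hα'
    (hst.symm.trans hα's.symm) fun u hu hmem => hfirst u hu (himage ▸ hmem)
  refine ⟨f, c', d', hf, ?_⟩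
  rw [hfimage, himage]
  exact insert_subset (Or.inl ⟨c, left_mem_Icc.2 ht.1, rfl⟩) subset_union_right

theorem exists_isArc_subset_image [Nonempty X] (s : Finset X) :
    ∃ f a b, IsArc f a b ∧ (s : Set X) ⊆ f '' Icc a b := by
  classical
  induction s using Finset.induction_on with
  | empty =>
    obtain ⟨x⟩ := ‹Nonempty X›
    exact ⟨_, 0, 0, isArc_const x 0, by simp⟩
  | insert p s _ ih =>
    obtain ⟨α, a, b, hα, hs⟩ := ih
    obtain ⟨f, c, d, hf, hsub⟩ := hα.exists_insert_subset_image p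
    exact ⟨f, c, d, hf, by rw [Finset.coe_insert]; exact (insert_subset_insert hs).trans hsub⟩

end ArcConnected

section Length

variable {X : Type*} [MetricSpace X] [MeasurableSpace X] [BorelSpace X]

theorem IsPreconnected.edist_le_hausdorffMeasure {S : Set X} (hS : IsPreconnected S) {x y : X}
    (hx : x ∈ S) (hy : y ∈ S) : edist x y ≤ μH[1] S := by
  have hIcc : Icc (dist y y) (dist x y) ⊆ (dist · y) '' S :=
    (hS.image _ (LipschitzWith.dist_left y).continuous.continuousOn).Icc_subset
      (mem_image_of_mem _ hy) (mem_image_of_mem _ hx)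
  calc edist x y = μH[1] (Icc (dist y y) (dist x y)) := by
        rw [hausdorffMeasure_real, Real.volume_Icc, dist_self, sub_zero, edist_dist]
    _ ≤ μH[1] ((dist · y) '' S) := measure_mono hIcc
    _ ≤ μH[1] S := by
        simpa using (LipschitzWith.dist_left y).hausdorffMeasure_image_le zero_le_one S

theorem IsArc.sum_edist_le_hausdorffMeasure {f : ℝ → X} {a b : ℝ} (hf : IsArc f a b) {k : ℕ}
    {u : Fin (k + 1) → ℝ} (hu : Monotone u) (huab : ∀ i, u i ∈ Icc a b) :
    ∑ i : Fin k, edist (f (u i.succ)) (f (u i.castSucc)) ≤ μH[1] (f '' Icc a b) := by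
  have := Measure.nullSingletonClass_hausdorff X one_pos
  set A : Fin k → Set X := fun i => f '' Icc (u i.castSucc) (u i.succ)
  have hsub : ∀ i : Fin k, Icc (u i.castSucc) (u i.succ) ⊆ Icc a b :=
    fun i => Icc_subset_Icc (huab _).1 (huab _).2
  have hdisj : ∀ i j, i < j → AEDisjoint μH[1] (A i) (A j) := by
    intro i j hij
    have hle : u i.succ ≤ u j.castSucc :=
      hu (Fin.castSucc_lt_iff_succ_le.1 (Fin.castSucc_lt_castSucc_iff.2 hij))
    refine measure_mono_null ?_ (measure_singleton (f (u j.castSucc)))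
    rw [← hf.injOn.image_inter (hsub i) (hsub j)]
    refine (image_mono fun t ht => ?_).trans image_singleton.subset
    exact le_antisymm (ht.1.2.trans hle) ht.2.1
  calc ∑ i : Fin k, edist (f (u i.succ)) (f (u i.castSucc))
      ≤ ∑ i, μH[1] (A i) := Finset.sum_le_sum fun i _ =>
        (isPreconnected_Icc.image f hf.continuous.continuousOn).edist_le_hausdorffMeasure
          (mem_image_of_mem f (right_mem_Icc.2 (hu (Fin.castSucc_le_succ i))))
          (mem_image_of_mem f (left_mem_Icc.2 (hu (Fin.castSucc_le_succ i))))
    _ = μH[1] (⋃ i, A i) := by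
        rw [measure_iUnion₀ (fun i j hij => hij.lt_or_gt.elim (hdisj i j)
          fun h => (hdisj j i h).symm) fun i =>
            (isCompact_Icc.image hf.continuous).isClosed.measurableSet.nullMeasurableSet,
          tsum_fintype]
    _ ≤ μH[1] (f '' Icc a b) := measure_mono (iUnion_subset fun i => image_mono (hsub i))

end Length

theorem pathLength_eq_sum_dist {E : Type*} [NormedAddCommGroup E] {k : ℕ}
    (x : Fin (k + 1) → E) : pathLength x = ∑ i : Fin k, dist (x i.succ) (x i.castSucc) := by
  rw [pathLength, Fin.sum_univ_castSucc]
  simp [dist_eq_norm, Fin.succ]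

theorem IsArc.ofReal_pathLength_le_hausdorffMeasure {E : Type*} [NormedAddCommGroup E]
    [MeasurableSpace E] [BorelSpace E] {f : ℝ → E} {a b : ℝ} (hf : IsArc f a b) {n : ℕ}
    {u : Fin n → ℝ} (hu : Monotone u) (huab : ∀ i, u i ∈ Icc a b) :
    ENNReal.ofReal (pathLength (f ∘ u)) ≤ μH[1] (f '' Icc a b) := by
  cases n with
  | zero => simp [pathLength]
  | succ k =>
    rw [pathLength_eq_sum_dist, ENNReal.ofReal_sum_of_nonneg fun _ _ => dist_nonneg]
    simpa only [Function.comp_apply, ← edist_dist] using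
      hf.sum_edist_le_hausdorffMeasure hu huab

def halfLineHomeomorph :
    {x : ℝ × EuclideanSpace ℝ (Fin 0) // 0 ≤ x.1} ≃ₜ Ici (0 : ℝ) :=
  (Homeomorph.prodUnique ℝ _).subtype fun _ => Iff.rfl

theorem IsCompactTopManifoldWithBoundary.exists_chart {E : Type*} [TopologicalSpace E]
    {M : Set E} (hM : IsCompactTopManifoldWithBoundary 1 M) (x : M) :
    ∃ e : OpenPartialHomeomorph M (Ici (0 : ℝ)), x ∈ e.source := by
  obtain ⟨U, hU, hxU, V, hV, ⟨φ⟩⟩ := hM.2 x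
  have : Nonempty V := ⟨φ ⟨x, hxU⟩⟩
  have hg : IsOpenEmbedding (Subtype.val ∘ φ.symm) :=
    hU.isOpenEmbedding_subtypeVal.comp φ.symm.isOpenEmbedding
  have hk : IsOpenEmbedding (halfLineHomeomorph ∘ Subtype.val : V → Ici (0 : ℝ)) :=
    halfLineHomeomorph.isOpenEmbedding.comp hV.isOpenEmbedding_subtypeVal
  refine ⟨(hg.toOpenPartialHomeomorph _).symm.trans (hk.toOpenPartialHomeomorph _), ?_⟩
  simpa using hxU

abbrev IsCompactTopManifoldWithBoundary.chartedSpace {E : Type*} [TopologicalSpace E]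
    {M : Set E} (hM : IsCompactTopManifoldWithBoundary 1 M) : ChartedSpace (Ici (0 : ℝ)) M where
  atlas := range fun x => (hM.exists_chart x).choose
  chartAt x := (hM.exists_chart x).choose
  mem_chart_source x := (hM.exists_chart x).choose_spec
  chart_mem_atlas x := mem_range_self x

theorem tsp_path_le_hausdorff_measure_of_one_manifold_general
    (m n : ℕ) (M : Set (EuclideanSpace ℝ (Fin m)))
    (hMan : IsCompactTopManifoldWithBoundary 1 M)
    (hconn : IsConnected M)
    (X : Fin n → EuclideanSpace ℝ (Fin m)) (hX : ∀ i, X i ∈ M) :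
    ∃ σ : Equiv.Perm (Fin n),
      ENNReal.ofReal (pathLength (X ∘ σ)) ≤ μH[(1 : ℝ)] M := by
  let := hMan.chartedSpace
  have := isConnected_iff_connectedSpace.1 hconn
  obtain ⟨F, a, b, hF, hXF⟩ :=
    exists_isArc_subset_image (Finset.univ.image fun i => (⟨X i, hX i⟩ : M))
  choose t ht hXt using fun i => hXF (by simp : (⟨X i, hX i⟩ : M) ∈ _)
  have hf : IsArc (Subtype.val ∘ F) a b := hF.comp continuous_subtype_val Subtype.val_injective
  refine ⟨Tuple.sort t, ?_⟩
  have hXσ : X ∘ Tuple.sort t = (Subtype.val ∘ F) ∘ (t ∘ Tuple.sort t) := by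
    funext i
    simp [hXt]
  calc ENNReal.ofReal (pathLength (X ∘ Tuple.sort t))
      ≤ μH[1] ((Subtype.val ∘ F) '' Icc a b) := hXσ ▸
        hf.ofReal_pathLength_le_hausdorffMeasure (Tuple.monotone_sort t) fun i => ht _
    _ ≤ μH[1] M := measure_mono (by rintro _ ⟨s, -, rfl⟩; exact (F s).2)

/-- Traveling-salesman bound on a one-dimensional manifold (Lemma 3.2 for
`d₁ = 1`): if `M ⊆ ℝ^m` is a compact connected topological `1`-manifold with
boundary with `H¹(M) < ∞` and `X_1, …, X_n ∈ M`, then some ordering `σ` of the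
points satisfies `Σ_{i=1}^{n-1} ‖X_{σ(i+1)} - X_{σ(i)}‖ ≤ H¹(M)`. -/
theorem tsp_path_le_hausdorff_measure_of_one_manifold
    (m n : ℕ) (M : Set (EuclideanSpace ℝ (Fin m)))
    (hMan : IsCompactTopManifoldWithBoundary 1 M)
    (hconn : IsConnected M)
    (hfin : μH[(1 : ℝ)] M < ⊤)
    (X : Fin n → EuclideanSpace ℝ (Fin m)) (hX : ∀ i, X i ∈ M) :
    ∃ σ : Equiv.Perm (Fin n),
      ENNReal.ofReal (pathLength (X ∘ σ)) ≤ μH[(1 : ℝ)] M :=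
  tsp_path_le_hausdorff_measure_of_one_manifold_general m n M hMan hconn X hX

end
end

section
/- Traveling-salesman bound along a Hölder curve of exponent 1/d (key step in the proof of Lemma 3.2): Let d ≥ 1 be an integer, m ≥ 1 an integer, H ≥ 0, and let ψ : [0,1] → ℝ^m satisfy ‖ψ(s) − ψ(t)‖ ≤ H·|s − t|^{1/d} for all s, t ∈ [0,1]. Let X₁, …, Xₙ be points of the image ψ([0,1]). Then there exists a permutation σ of {1, …, n} such that Σ_{i=1}^{n−1} ‖X_{σ(i+1)} − X_{σ(i)}‖^{d} ≤ H^{d}. -/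
open Metric Set

noncomputable section

/-- The sum `Σ_{i=1}^{n-1} ‖x_{i+1} - x_i‖^d` of `d`-th powers of the lengths of
consecutive increments. -/
def pathPowerLength {E : Type*} [NormedAddCommGroup E] (d : ℕ) {n : ℕ}
    (x : Fin n → E) : ℝ :=
  ∑ i : Fin n, if h : (i : ℕ) + 1 < n then ‖x ⟨(i : ℕ) + 1, h⟩ - x i‖ ^ d else 0

/-- Traveling-salesman bound along a Hölder curve of exponent `1/d` (key step in
the proof of Lemma 3.2): if `ψ : [0,1] → ℝ^{m'}` is `(1/d)`-Hölder with constant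
`H` and `X_1, …, X_n` lie in the image of `ψ`, then some ordering `σ` of the
points satisfies `Σ_{i=1}^{n-1} ‖X_{σ(i+1)} - X_{σ(i)}‖^d ≤ H^d`. -/
theorem tsp_power_length_le_of_holder_curve
    (d m' n : ℕ) (hd : 1 ≤ d) (hm' : 1 ≤ m') (H : ℝ) (hH : 0 ≤ H)
    (ψ : ℝ → EuclideanSpace ℝ (Fin m'))
    (hψ : ∀ s ∈ Set.Icc (0 : ℝ) 1, ∀ t ∈ Set.Icc (0 : ℝ) 1,
      ‖ψ s - ψ t‖ ≤ H * |s - t| ^ (1 / (d : ℝ)))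
    (X : Fin n → EuclideanSpace ℝ (Fin m'))
    (hX : ∀ i, ∃ t ∈ Set.Icc (0 : ℝ) 1, ψ t = X i) :
    ∃ σ : Equiv.Perm (Fin n), pathPowerLength d (X ∘ σ) ≤ H ^ d := by
  rcases Nat.eq_zero_or_pos n with hn | hn
  · subst hn
    exact ⟨Equiv.refl _, by simp [pathPowerLength, pow_nonneg hH]⟩
  choose t ht hψt using hX
  set σ := Tuple.sort t with hσ
  have hmono : Monotone (t ∘ σ) := Tuple.monotone_sort t
  refine ⟨σ, ?_⟩
  set u : ℕ → ℝ := fun k => t (σ ⟨min k (n - 1), by omega⟩) with hu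
  have humono : Monotone u := fun a b hab => hmono (by simp [Fin.le_def]; omega)
  have hdne : (d : ℝ) ≠ 0 := Nat.cast_ne_zero.mpr (by omega)
  -- bound each term
  have hterm : ∀ i : Fin n,
      (if h : (i : ℕ) + 1 < n then ‖(X ∘ σ) ⟨(i : ℕ) + 1, h⟩ - (X ∘ σ) i‖ ^ d else 0)
        ≤ (if (i : ℕ) + 1 < n then H ^ d * (u ((i : ℕ) + 1) - u i) else 0) := by
    intro i
    by_cases h : (i : ℕ) + 1 < n
    · simp only [h, dif_pos, if_pos]
      have hkey : ∀ (k : ℕ) (hk : k < n), u k = t (σ ⟨k, hk⟩) := by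
        intro k hk
        have hmk : (⟨min k (n - 1), by omega⟩ : Fin n) = ⟨k, hk⟩ := by
          apply Fin.ext
          show min k (n - 1) = k
          omega
        simp only [hu, hmk]
      have h1 : (X ∘ σ) ⟨(i : ℕ) + 1, h⟩ = ψ (u ((i : ℕ) + 1)) := by
        rw [hkey _ h, hψt]
        rfl
      have h2 : (X ∘ σ) i = ψ (u (i : ℕ)) := by
        rw [hkey _ i.isLt, hψt]
        simp
      rw [h1, h2]
      have hle : u (i : ℕ) ≤ u ((i : ℕ) + 1) := humono (Nat.le_succ _)
      have hmem : ∀ k, u k ∈ Set.Icc (0 : ℝ) 1 := fun k => ht _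
      have hb := hψ _ (hmem ((i : ℕ) + 1)) _ (hmem (i : ℕ))
      have habs : |u ((i : ℕ) + 1) - u (i : ℕ)| = u ((i : ℕ) + 1) - u (i : ℕ) :=
        abs_of_nonneg (by linarith)
      calc ‖ψ (u ((i : ℕ) + 1)) - ψ (u (i : ℕ))‖ ^ d
          ≤ (H * |u ((i : ℕ) + 1) - u (i : ℕ)| ^ (1 / (d : ℝ))) ^ d := by
            apply pow_le_pow_left₀ (norm_nonneg _) hb
        _ = H ^ d * (u ((i : ℕ) + 1) - u (i : ℕ)) := by
            rw [mul_pow, habs]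
            congr 1
            rw [← Real.rpow_natCast ((u ((i : ℕ) + 1) - u (i : ℕ)) ^ (1 / (d : ℝ))) d,
              ← Real.rpow_mul (by linarith), one_div, inv_mul_cancel₀ hdne, Real.rpow_one]
    · simp [h]
  have hsum := Finset.sum_le_sum (fun i (_ : i ∈ Finset.univ) => hterm i)
  refine le_trans hsum ?_
  -- telescoping
  have : ∑ i : Fin n, (if (i : ℕ) + 1 < n then H ^ d * (u ((i : ℕ) + 1) - u i) else 0)
      = ∑ i ∈ Finset.range n, (if i + 1 < n then H ^ d * (u (i + 1) - u i) else 0) :=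
    (Fin.sum_univ_eq_sum_range (fun i => if i + 1 < n then H ^ d * (u (i + 1) - u i) else 0) n)
  rw [this]
  have hsplit : ∑ i ∈ Finset.range n, (if i + 1 < n then H ^ d * (u (i + 1) - u i) else 0)
      = ∑ i ∈ Finset.range (n - 1), (H ^ d * (u (i + 1) - u i)) := by
    have hn1 : n = (n - 1) + 1 := by omega
    rw [hn1, Finset.sum_range_succ, if_neg (by omega), add_zero]
    exact Finset.sum_congr rfl fun i hi => by
      rw [if_pos (by simpa using Nat.lt_of_lt_of_le (Finset.mem_range.mp hi) (by omega))]
  rw [hsplit, ← Finset.mul_sum, Finset.sum_range_sub]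
  have h0 : u 0 ∈ Set.Icc (0 : ℝ) 1 := ht _
  have h1 : u (n - 1) ∈ Set.Icc (0 : ℝ) 1 := ht _
  calc H ^ d * (u (n - 1) - u 0) ≤ H ^ d * 1 := by
        apply mul_le_mul_of_nonneg_left _ (pow_nonneg hH d)
        have := h0.1; have := h1.2; linarith
    _ = H ^ d := mul_one _
end
end

section
/- Existence of a Hölder space-filling curve (Lemma B.2): For every integer d ≥ 1 there exists a surjective map ψ_d : [0,1] → [0,1]^d that is Hölder continuous of order 1/d with constant 2·sqrt(d+3), i.e., ‖ψ_d(s) − ψ_d(t)‖ ≤ 2·sqrt(d+3)·|s − t|^{1/d} for all s, t ∈ [0,1]. -/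
/-!
The curve is a Hilbert-type curve. At level `n` the cube is cut into the `2 ^ (d * n)` dyadic
cells of side `2 ^ (-n)`, listed so that consecutive cells share a face. Level `n + 1` runs through
the `2 ^ d` subcells of each cell consecutively, along a Hamiltonian path of the hypercube
`{0, 1} ^ d` whose last corner touches the first subcell visited in the next cell; for `d ≥ 2`
this is possible because any two adjacent vertices of the hypercube are joined by a Hamiltonian
path. The point `ψ t` is the limit of the corners of the cells visited at time `t`.

If `|s - t| ≤ 2 ^ (-d * n)`, then `s` and `t` fall into equal or adjacent cells of level `n`, so
`ψ s` and `ψ t` lie in cubes of side `2 ^ (-n)` whose corners differ by `2 ^ (-n)` in at most one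
coordinate, and `‖ψ s - ψ t‖ ≤ √(d + 3) * 2 ^ (-n)`. The image of `ψ` is compact and meets
every cell of every level, hence it is the whole cube. For `d = 1` the identity does it.
-/

open Set

namespace SpaceFillingCurve

/-! ### Hamiltonian paths in the hypercube -/

structure IsHamiltonianPath {α : Type*} (r : α → α → Prop) (l : List α) (a b : α) :
    Prop where
  isChain : l.IsChain r
  head?_eq : l.head? = some a
  getLast?_eq : l.getLast? = some b
  nodup : l.Nodup
  mem : ∀ x, x ∈ l

namespace IsHamiltonianPath

variable {α : Type*} {r : α → α → Prop} {l : List α} {a b : α}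

theorem length_eq_card [Fintype α] (h : IsHamiltonianPath r l a b) :
    l.length = Fintype.card α := by
  classical
  simpa using Fintype.card_congr (h.nodup.getEquivOfForallMemList l h.mem)

theorem getD_zero (h : IsHamiltonianPath r l a b) (x : α) : l.getD 0 x = a := by
  simpa [List.getD_eq_getElem?_getD, ← List.head?_eq_getElem?] using
    congrArg (·.getD x) h.head?_eq

theorem getD_length_sub_one (h : IsHamiltonianPath r l a b) (x : α) :
    l.getD (l.length - 1) x = b := by
  simpa [List.getD_eq_getElem?_getD, ← List.getLast?_eq_getElem?] using
    congrArg (·.getD x) h.getLast?_eq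

theorem rel_getD (h : IsHamiltonianPath r l a b) (x : α) {k : ℕ} (hk : k + 1 < l.length) :
    r (l.getD k x) (l.getD (k + 1) x) := by
  rw [List.getD_eq_getElem _ _ (by omega), List.getD_eq_getElem _ _ hk]
  exact List.isChain_iff_getElem.mp h.isChain k hk

theorem exists_getD_eq (h : IsHamiltonianPath r l a b) (x y : α) :
    ∃ k < l.length, l.getD k x = y := by
  obtain ⟨k, hk, rfl⟩ := List.getElem_of_mem (h.mem y)
  exact ⟨k, hk, List.getD_eq_getElem _ _ hk⟩

end IsHamiltonianPath

variable {d : ℕ}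

def flipCoord (u : Fin d → Bool) (i : Fin d) : Fin d → Bool := Function.update u i (!u i)

def HypercubeAdj (u v : Fin d → Bool) : Prop := ∃ i, v = flipCoord u i

@[simp]
theorem flipCoord_self (u : Fin d → Bool) (i : Fin d) : flipCoord u i i = !u i := by
  simp [flipCoord]

theorem flipCoord_of_ne (u : Fin d → Bool) {i j : Fin d} (h : j ≠ i) :
    flipCoord u i j = u j := by
  simp [flipCoord, h]

@[simp]
theorem flipCoord_flipCoord (u : Fin d → Bool) (i : Fin d) : flipCoord (flipCoord u i) i = u := by
  simp [flipCoord]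

theorem HypercubeAdj.symm {u v : Fin d → Bool} (h : HypercubeAdj u v) : HypercubeAdj v u := by
  obtain ⟨i, rfl⟩ := h
  exact ⟨i, (flipCoord_flipCoord u i).symm⟩

theorem hypercubeAdj_flipCoord (u : Fin d → Bool) (i : Fin d) : HypercubeAdj u (flipCoord u i) :=
  ⟨i, rfl⟩

def layer (a : Bool) (u : Fin d → Bool) : Fin (d + 1) → Bool := Fin.snoc u a

theorem layer_injective (a : Bool) : Function.Injective (layer (d := d) a) := fun u v h => by
  simpa [layer] using congrArg Fin.init h

theorem layer_init_last (w : Fin (d + 1) → Bool) : layer (w (Fin.last d)) (Fin.init w) = w :=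
  Fin.snoc_init_self w

theorem flipCoord_layer_castSucc (a : Bool) (u : Fin d → Bool) (i : Fin d) :
    flipCoord (layer a u) i.castSucc = layer a (flipCoord u i) := by
  simp [flipCoord, layer, Fin.snoc_update]

theorem flipCoord_layer_last (a : Bool) (u : Fin d → Bool) :
    flipCoord (layer a u) (Fin.last d) = layer (!a) u := by
  simp [flipCoord, layer, Fin.update_snoc_last]

theorem HypercubeAdj.layer {u v : Fin d → Bool} (h : HypercubeAdj u v) (a : Bool) :
    HypercubeAdj (layer a u) (layer a v) := by
  obtain ⟨i, rfl⟩ := h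
  exact ⟨i.castSucc, (flipCoord_layer_castSucc a u i).symm⟩

theorem hypercubeAdj_layer_not (a : Bool) (u : Fin d → Bool) :
    HypercubeAdj (layer a u) (layer (!a) u) :=
  ⟨Fin.last d, (flipCoord_layer_last a u).symm⟩

theorem mem_map_layer {l : List (Fin d → Bool)} {a : Bool} {w : Fin (d + 1) → Bool} :
    w ∈ l.map (layer a) ↔ Fin.init w ∈ l ∧ w (Fin.last d) = a := by
  rw [List.mem_map]
  constructor
  · rintro ⟨u, hu, rfl⟩
    simpa [layer] using hu
  · rintro ⟨hw, rfl⟩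
    exact ⟨_, hw, layer_init_last w⟩

theorem disjoint_map_layer (l m : List (Fin d → Bool)) (a : Bool) :
    (l.map (layer a)).Disjoint (m.map (layer !a)) := by
  refine List.disjoint_left.mpr fun w hl hm => ?_
  rw [mem_map_layer] at hl hm
  simp [hl.2] at hm

theorem IsHamiltonianPath.double {l : List (Fin d → Bool)} {u w : Fin d → Bool}
    (h : IsHamiltonianPath HypercubeAdj l u w) (a : Bool) :
    IsHamiltonianPath HypercubeAdj (l.map (layer a) ++ l.reverse.map (layer !a))
      (layer a u) (layer (!a) u) where
  isChain := by
    refine (List.isChain_map_of_isChain _ (fun _ _ h => h.layer a) h.isChain).append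
      (List.isChain_map_of_isChain _ (fun _ _ h => h.layer !a)
        (List.isChain_reverse.mpr (h.isChain.imp fun _ _ h => h.symm))) ?_
    intro x hx y hy
    rw [List.getLast?_map, h.getLast?_eq] at hx
    rw [List.head?_map, List.head?_reverse, h.getLast?_eq] at hy
    simp only [Option.map_some, Option.mem_def, Option.some_inj] at hx hy
    subst hx hy
    exact hypercubeAdj_layer_not a w
  head?_eq := by
    rw [List.head?_append, List.head?_map, h.head?_eq]
    rfl
  getLast?_eq := by
    rw [List.getLast?_append, List.getLast?_map, List.getLast?_reverse, h.head?_eq]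
    rfl
  nodup := (h.nodup.map (layer_injective a)).append
    ((List.nodup_reverse.mpr h.nodup).map (layer_injective _)) (disjoint_map_layer _ _ a)
  mem w := by
    rw [List.mem_append, mem_map_layer, mem_map_layer, List.mem_reverse]
    cases w (Fin.last d) <;> cases a <;> simp [h.mem]

theorem IsHamiltonianPath.detour {u p v : Fin d → Bool} {rest : List (Fin d → Bool)}
    (h : IsHamiltonianPath HypercubeAdj (u :: p :: rest) u v) {m : List (Fin d → Bool)}
    (hm : IsHamiltonianPath HypercubeAdj m u p) (a : Bool) :
    IsHamiltonianPath HypercubeAdj (layer a u :: (m.map (layer !a) ++ (p :: rest).map (layer a)))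
      (layer a u) (layer a v) where
  isChain := by
    have hmp : (m.map (layer !a)).head? = some (layer (!a) u) := by
      rw [List.head?_map, hm.head?_eq]
      rfl
    refine List.isChain_cons.mpr ⟨?_, ?_⟩
    · intro y hy
      rw [List.head?_append, hmp] at hy
      simp only [Option.some_or, Option.mem_def, Option.some_inj] at hy
      subst hy
      exact hypercubeAdj_layer_not a u
    refine (List.isChain_map_of_isChain _ (fun _ _ h => h.layer !a) hm.isChain).append
      (List.isChain_map_of_isChain _ (fun _ _ h => h.layer a)
        (List.isChain_cons_cons.mp h.isChain).2) ?_
    intro x hx y hy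
    rw [List.getLast?_map, hm.getLast?_eq] at hx
    simp only [List.map_cons, List.head?_cons, Option.map_some, Option.mem_def,
      Option.some_inj] at hx hy
    subst hx hy
    simpa using hypercubeAdj_layer_not (!a) p
  head?_eq := rfl
  getLast?_eq := by
    have hv : (p :: rest).getLast? = some v := by
      rw [← List.getLast?_cons_cons (a := u)]
      exact h.getLast?_eq
    rw [List.getLast?_cons, List.getLast?_append, List.getLast?_map, hv]
    rfl
  nodup := by
    obtain ⟨hu, hrest⟩ := List.nodup_cons.mp h.nodup
    refine List.nodup_cons.mpr ⟨?_, (hm.nodup.map (layer_injective _)).append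
      (hrest.map (layer_injective a)) (by simpa using disjoint_map_layer m (p :: rest) (!a))⟩
    rw [List.mem_append, mem_map_layer, mem_map_layer]
    simpa [layer] using hu
  mem w := by
    have := h.mem (Fin.init w)
    rw [List.mem_cons, List.mem_append, mem_map_layer, mem_map_layer, ← layer_init_last w]
    cases w (Fin.last d) <;> cases a <;> simp_all [hm.mem, layer]

theorem exists_isHamiltonianPath_from : ∀ {d : ℕ} (u : Fin d → Bool),
    ∃ l w, IsHamiltonianPath HypercubeAdj l u w
  | 0, u => ⟨[u], u, List.isChain_singleton u, rfl, rfl, List.nodup_singleton u,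
      fun w => List.mem_singleton.mpr (Subsingleton.elim w u)⟩
  | _ + 1, u => by
    obtain ⟨l, w, h⟩ := exists_isHamiltonianPath_from (Fin.init u)
    rw [← layer_init_last u]
    exact ⟨_, _, h.double _⟩

theorem exists_isHamiltonianPath_flipCoord : ∀ {d : ℕ} (u : Fin d → Bool) (i : Fin d),
    ∃ l, IsHamiltonianPath HypercubeAdj l u (flipCoord u i)
  | 0, _, i => i.elim0
  | d + 1, u, i => by
    rw [← layer_init_last u]
    set a := u (Fin.last d)
    set u := Fin.init u
    induction i using Fin.lastCases with
    | last =>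
      obtain ⟨l, w, h⟩ := exists_isHamiltonianPath_from u
      exact ⟨_, by rw [flipCoord_layer_last]; exact h.double a⟩
    | cast i =>
      obtain ⟨l, h⟩ := exists_isHamiltonianPath_flipCoord u i
      obtain ⟨p, rest, rfl⟩ : ∃ p rest, l = u :: p :: rest := by
        match l, h with
        | [_], h =>
          have hu := h.head?_eq
          have hv := h.getLast?_eq
          simp only [List.head?_cons, List.getLast?_singleton, Option.some_inj] at hu hv
          simpa using congrFun (hu.symm.trans hv) i
        | _ :: p :: rest, h => exact ⟨p, rest, by simpa using h.head?_eq⟩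
      obtain ⟨j, rfl⟩ : HypercubeAdj u p := (List.isChain_cons_cons.mp h.isChain).1
      obtain ⟨m, hm⟩ := exists_isHamiltonianPath_flipCoord u j
      exact ⟨_, by rw [flipCoord_layer_castSucc]; exact h.detour hm a⟩

theorem exists_hypercubeAdj_apply_eq (hd : 2 ≤ d) (e : Fin d → Bool) (i : Fin d) (b : Bool) :
    ∃ x, HypercubeAdj e x ∧ x i = b := by
  by_cases he : e i = b
  · obtain ⟨j, hj⟩ : ∃ j : Fin d, j ≠ i := by
      by_cases hi : (i : ℕ) = 0
      · exact ⟨⟨1, by omega⟩, fun h => by simp [Fin.ext_iff, hi] at h⟩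
      · exact ⟨⟨0, by omega⟩, fun h => hi (by simp [Fin.ext_iff] at h; omega)⟩
    exact ⟨flipCoord e j, hypercubeAdj_flipCoord e j, by rw [flipCoord_of_ne e hj.symm, he]⟩
  · exact ⟨flipCoord e i, hypercubeAdj_flipCoord e i, by cases b <;> simp_all⟩

/-! ### Paths of dyadic cells -/

/-- A cell of level `n` is `p : Fin d → ℕ`, standing for the cube `∏ i, [p i, p i + 1] / 2 ^ n`;
its subcells are the `child p v`, and two cells are adjacent when they share a face. -/
def CellAdj (p q : Fin d → ℕ) : Prop :=
  ∃ i, (∀ j, j ≠ i → p j = q j) ∧ (p i + 1 = q i ∨ q i + 1 = p i)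

theorem CellAdj.symm {p q : Fin d → ℕ} (h : CellAdj p q) : CellAdj q p := by
  obtain ⟨i, hj, hi⟩ := h
  exact ⟨i, fun j hji => (hj j hji).symm, hi.symm⟩

theorem CellAdj.sum_abs_sub_eq_one {p q : Fin d → ℕ} (h : CellAdj p q) :
    ∑ j, |(p j : ℝ) - q j| = 1 := by
  obtain ⟨i, hj, hi⟩ := h
  rw [← Finset.add_sum_erase _ _ (Finset.mem_univ i), Finset.sum_eq_zero fun j hj' => by
    rw [hj j (Finset.ne_of_mem_erase hj'), sub_self, abs_zero]]
  rcases hi with hi | hi <;> rw [← hi] <;> simp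

def child (p : Fin d → ℕ) (v : Fin d → Bool) : Fin d → ℕ := fun i => 2 * p i + (v i).toNat

def parent (c : Fin d → ℕ) : Fin d → ℕ := fun i => c i / 2

@[simp]
theorem parent_child (p : Fin d → ℕ) (v : Fin d → Bool) : parent (child p v) = p := by
  ext i
  have := Bool.toNat_le (v i)
  simp only [parent, child]
  omega

theorem child_parent (c : Fin d → ℕ) :
    child (parent c) (fun i => decide (c i % 2 = 1)) = c := by
  ext i
  simp only [parent, child]
  rcases Nat.mod_two_eq_zero_or_one (c i) with h | h <;> simp [h] <;> omega

theorem HypercubeAdj.cellAdj_child {u v : Fin d → Bool} (h : HypercubeAdj u v)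
    (p : Fin d → ℕ) : CellAdj (child p u) (child p v) := by
  obtain ⟨i, rfl⟩ := h
  refine ⟨i, fun j hj => by simp [child, flipCoord_of_ne u hj], ?_⟩
  cases hu : u i <;> simp [child, hu]

theorem cellAdj_child_flipCoord {p q : Fin d → ℕ} {i : Fin d}
    (hpq : ∀ j, j ≠ i → p j = q j) (hi : p i + 1 = q i) {x : Fin d → Bool}
    (hx : x i = true) :
    CellAdj (child p x) (child q (flipCoord x i)) := by
  refine ⟨i, fun j hj => by simp [child, flipCoord_of_ne x hj, hpq j hj], Or.inl ?_⟩
  simp [child, hx, ← hi]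
  ring

/-- `xy.1` is the corner through which the path leaves `p`, `xy.2` the one through which it enters
`q`. Since `xy.1` must be adjacent to the entry corner `e` and on the side of `q`, a second
coordinate is needed when `e` is already on that side. -/
theorem exists_exit_entry (hd : 2 ≤ d) (e : Fin d → Bool) (p q : Fin d → ℕ) :
    ∃ xy : (Fin d → Bool) × (Fin d → Bool),
      HypercubeAdj e xy.1 ∧ (CellAdj p q → CellAdj (child p xy.1) (child q xy.2)) := by
  by_cases hpq : CellAdj p q
  · obtain ⟨i, hj, hi | hi⟩ := hpq
    · obtain ⟨x, hex, hx⟩ := exists_hypercubeAdj_apply_eq hd e i true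
      exact ⟨(x, flipCoord x i), hex, fun _ => cellAdj_child_flipCoord hj hi hx⟩
    · obtain ⟨x, hex, hx⟩ := exists_hypercubeAdj_apply_eq hd e i false
      refine ⟨(x, flipCoord x i), hex, fun _ => ?_⟩
      simpa using (cellAdj_child_flipCoord (fun j hji => (hj j hji).symm) hi
        (x := flipCoord x i) (by simp [hx])).symm
  · exact ⟨(flipCoord e ⟨0, by omega⟩, e), hypercubeAdj_flipCoord e _,
      fun h => absurd h hpq⟩

noncomputable def hamiltonianPath (u v : Fin d → Bool) : List (Fin d → Bool) :=
  Classical.epsilon fun l => IsHamiltonianPath HypercubeAdj l u v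

theorem HypercubeAdj.isHamiltonianPath {u v : Fin d → Bool} (h : HypercubeAdj u v) :
    IsHamiltonianPath HypercubeAdj (hamiltonianPath u v) u v := by
  obtain ⟨i, rfl⟩ := h
  exact Classical.epsilon_spec (exists_isHamiltonianPath_flipCoord u i)

noncomputable def exitEntry (e : Fin d → Bool) (p q : Fin d → ℕ) :
    (Fin d → Bool) × (Fin d → Bool) :=
  Classical.epsilon fun xy =>
    HypercubeAdj e xy.1 ∧ (CellAdj p q → CellAdj (child p xy.1) (child q xy.2))

theorem exitEntry_spec (hd : 2 ≤ d) (e : Fin d → Bool) (p q : Fin d → ℕ) :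
    HypercubeAdj e (exitEntry e p q).1 ∧
      (CellAdj p q → CellAdj (child p (exitEntry e p q).1) (child q (exitEntry e p q).2)) :=
  Classical.epsilon_spec (exists_exit_entry hd e p q)

section Subdivide

variable (γ : ℕ → Fin d → ℕ)

noncomputable def entry : ℕ → Fin d → Bool
  | 0 => fun _ => false
  | j + 1 => (exitEntry (entry j) (γ j) (γ (j + 1))).2

noncomputable def block (j : ℕ) : List (Fin d → Bool) :=
  hamiltonianPath (entry γ j) (exitEntry (entry γ j) (γ j) (γ (j + 1))).1

noncomputable def subdivide (k : ℕ) : Fin d → ℕ :=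
  child (γ (k / 2 ^ d)) ((block γ (k / 2 ^ d)).getD (k % 2 ^ d) fun _ => false)

variable {γ}

theorem isHamiltonianPath_block (hd : 2 ≤ d) (j : ℕ) :
    IsHamiltonianPath HypercubeAdj (block γ j) (entry γ j)
      (exitEntry (entry γ j) (γ j) (γ (j + 1))).1 :=
  (exitEntry_spec hd _ _ _).1.isHamiltonianPath

theorem length_block (hd : 2 ≤ d) (j : ℕ) : (block γ j).length = 2 ^ d := by
  simp [(isHamiltonianPath_block hd j).length_eq_card]

theorem subdivide_mul_add (j : ℕ) {r : ℕ} (hr : r < 2 ^ d) :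
    subdivide γ (2 ^ d * j + r) = child (γ j) ((block γ j).getD r fun _ => false) := by
  have h2 : 0 < 2 ^ d := by positivity
  simp [subdivide, Nat.mul_add_div h2, Nat.div_eq_of_lt hr, Nat.mod_eq_of_lt hr]

theorem parent_subdivide (k : ℕ) : parent (subdivide γ k) = γ (k / 2 ^ d) :=
  parent_child _ _

theorem cellAdj_subdivide (hd : 2 ≤ d) {N : ℕ}
    (hγ : ∀ k, k + 1 < N → CellAdj (γ k) (γ (k + 1))) {k : ℕ} (hk : k + 1 < 2 ^ d * N) :
    CellAdj (subdivide γ k) (subdivide γ (k + 1)) := by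
  have h2 : 0 < 2 ^ d := by positivity
  obtain ⟨j, r, hr, rfl⟩ : ∃ j r, r < 2 ^ d ∧ k = 2 ^ d * j + r :=
    ⟨k / 2 ^ d, k % 2 ^ d, Nat.mod_lt k h2, (Nat.div_add_mod k _).symm⟩
  have hB := isHamiltonianPath_block (γ := γ) hd j
  rw [subdivide_mul_add j hr]
  rcases Nat.lt_or_ge (r + 1) (2 ^ d) with hr1 | hr1
  · rw [add_assoc, subdivide_mul_add j hr1]
    exact (hB.rel_getD _ (by rwa [length_block hd])).cellAdj_child _
  · have hr' : r = (block γ j).length - 1 := by rw [length_block hd]; omega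
    have hj : j + 1 < N := by
      by_contra! hN
      have := Nat.mul_le_mul_left (2 ^ d) hN
      rw [Nat.mul_succ] at this
      omega
    rw [show 2 ^ d * j + r + 1 = 2 ^ d * (j + 1) + 0 by rw [Nat.mul_succ]; omega,
      subdivide_mul_add _ h2, hr', hB.getD_length_sub_one,
      (isHamiltonianPath_block hd (j + 1)).getD_zero]
    exact (exitEntry_spec hd _ _ _).2 (hγ j hj)

theorem exists_subdivide_eq (hd : 2 ≤ d) {N B : ℕ}
    (hγ : ∀ c : Fin d → ℕ, (∀ i, c i < B) → ∃ k < N, γ k = c)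
    {c : Fin d → ℕ} (hc : ∀ i, c i < 2 * B) : ∃ k < 2 ^ d * N, subdivide γ k = c := by
  obtain ⟨j, hj, hγj⟩ := hγ (parent c) fun i => by simp only [parent]; have := hc i; omega
  obtain ⟨r, hr, hrc⟩ := (isHamiltonianPath_block (γ := γ) hd j).exists_getD_eq
    (fun _ => false) (fun i => decide (c i % 2 = 1))
  rw [length_block hd] at hr
  refine ⟨2 ^ d * j + r, ?_, by rw [subdivide_mul_add j hr, hrc, hγj, child_parent]⟩
  calc 2 ^ d * j + r < 2 ^ d * (j + 1) := by rw [Nat.mul_succ]; omega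
    _ ≤ 2 ^ d * N := Nat.mul_le_mul_left _ hj

end Subdivide

noncomputable def level (d : ℕ) : ℕ → ℕ → Fin d → ℕ
  | 0 => fun _ _ => 0
  | n + 1 => subdivide (level d n)

theorem cellAdj_level (hd : 2 ≤ d) (n : ℕ) {k : ℕ} (hk : k + 1 < 2 ^ (d * n)) :
    CellAdj (level d n k) (level d n (k + 1)) := by
  induction n generalizing k with
  | zero => simp at hk
  | succ n ih =>
    rw [Nat.mul_succ, pow_add, mul_comm] at hk
    exact cellAdj_subdivide hd (fun _ => ih) hk

theorem exists_level_eq (hd : 2 ≤ d) (n : ℕ) {c : Fin d → ℕ} (hc : ∀ i, c i < 2 ^ n) :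
    ∃ k < 2 ^ (d * n), level d n k = c := by
  induction n generalizing c with
  | zero => exact ⟨0, by simp, funext fun i => (Nat.lt_one_iff.mp (by simpa using hc i)).symm⟩
  | succ n ih =>
    rw [Nat.mul_succ, pow_add, mul_comm]
    exact exists_subdivide_eq hd (fun _ => ih) (by simpa [pow_succ, mul_comm] using hc)

theorem parent_level_succ (n k : ℕ) : parent (level d (n + 1) k) = level d n (k / 2 ^ d) :=
  parent_subdivide k

/-! ### The curve -/

/-- The index `k < N` of a subinterval `[k / N, (k + 1) / N]` of `[0, 1]` containing `x`
(for `x = 1` it is `N - 1`, not `N`). -/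
noncomputable def intervalIndex (N : ℕ) (x : ℝ) : ℕ := min ⌊N * x⌋₊ (N - 1)

theorem intervalIndex_lt {N : ℕ} (hN : 0 < N) (x : ℝ) : intervalIndex N x < N := by
  unfold intervalIndex
  omega

theorem intervalIndex_natCast_div {N k : ℕ} (hk : k < N) : intervalIndex N (k / N) = k := by
  have hN : (N : ℝ) ≠ 0 := Nat.cast_ne_zero.mpr (by omega)
  simp only [intervalIndex, mul_div_cancel₀ _ hN, Nat.floor_natCast]
  omega

theorem intervalIndex_mul_div (N : ℕ) {M : ℕ} (hM : 0 < M) (x : ℝ) :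
    intervalIndex (N * M) x / M = intervalIndex N x := by
  unfold intervalIndex
  rw [Monotone.map_min fun a b h => Nat.div_le_div_right h, ← Nat.floor_div_natCast]
  congr 1
  · push_cast
    field_simp
  · rcases Nat.eq_zero_or_pos N with rfl | hN
    · simp
    refine Nat.div_eq_of_lt_le ?_ ?_
    · rw [Nat.sub_one_mul]
      omega
    · have : M ≤ N * M := Nat.le_mul_of_pos_left M hN
      rw [Nat.sub_add_cancel hN]
      omega

theorem intervalIndex_le_add_one {N : ℕ} (hN : 0 < N) {x y : ℝ} (hy : 0 ≤ y)
    (h : x ≤ y + (N : ℝ)⁻¹) : intervalIndex N x ≤ intervalIndex N y + 1 := by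
  have : ⌊N * x⌋₊ ≤ ⌊N * y⌋₊ + 1 := by
    rw [← Nat.floor_add_one (by positivity)]
    refine Nat.floor_le_floor ?_
    calc N * x ≤ N * (y + (N : ℝ)⁻¹) := by gcongr
      _ = N * y + 1 := by field_simp
  unfold intervalIndex
  omega

theorem intervalIndex_mem_Icc {N : ℕ} (hN : 0 < N) {x : ℝ} (hx : x ∈ Icc (0 : ℝ) 1) :
    x ∈ Icc ((intervalIndex N x : ℝ) / N) (intervalIndex N x / N + (N : ℝ)⁻¹) := by
  have hN' : (0 : ℝ) < N := by exact_mod_cast hN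
  have hlow : (intervalIndex N x : ℝ) ≤ N * x :=
    (Nat.cast_le.mpr (min_le_left _ _)).trans (Nat.floor_le (by nlinarith [hx.1]))
  have hup : N * x ≤ intervalIndex N x + 1 := by
    rcases min_choice ⌊N * x⌋₊ (N - 1) with h | h <;> rw [intervalIndex, h]
    · exact (Nat.lt_floor_add_one _).le
    · rw [Nat.cast_sub hN, Nat.cast_one, sub_add_cancel]
      nlinarith [hx.2]
  constructor
  · rwa [div_le_iff₀' hN']
  · rwa [inv_eq_one_div, ← add_div, le_div_iff₀' hN']

theorem ciSup_mem_Icc_of_le_succ {a : ℕ → ℝ}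
    (h : ∀ n, a (n + 1) ∈ Icc (a n) (a n + (2 ^ (n + 1))⁻¹)) (n : ℕ) :
    ⨆ m, a m ∈ Icc (a n) (a n + (2 ^ n)⁻¹) := by
  have hmono : Monotone a := monotone_nat_of_le_succ fun n => (h n).1
  have hanti : Antitone fun n => a n + (2 ^ n)⁻¹ := antitone_nat_of_succ_le fun n => by
    have : ((2 : ℝ) ^ n)⁻¹ = 2 * (2 ^ (n + 1))⁻¹ := by
      rw [pow_succ]
      field_simp
    linarith [(h n).2]
  have hle (m : ℕ) : a m ≤ a n + (2 ^ n)⁻¹ :=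
    calc a m ≤ a (max m n) := hmono (le_max_left m n)
      _ ≤ a (max m n) + (2 ^ max m n)⁻¹ := le_add_of_nonneg_right (by positivity)
      _ ≤ a n + (2 ^ n)⁻¹ := hanti (le_max_right m n)
  exact ⟨le_ciSup ⟨_, forall_mem_range.mpr hle⟩ n, ciSup_le hle⟩

theorem cast_div_two_pow_succ_mem_Icc (c n : ℕ) :
    (c : ℝ) / 2 ^ (n + 1) ∈ Icc (((c / 2 : ℕ) : ℝ) / 2 ^ n)
      (((c / 2 : ℕ) : ℝ) / 2 ^ n + (2 ^ (n + 1))⁻¹) := by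
  have hlow : 2 * ((c / 2 : ℕ) : ℝ) ≤ c := by exact_mod_cast Nat.mul_div_le c 2
  have hup : (c : ℝ) ≤ 2 * ((c / 2 : ℕ) : ℝ) + 1 := by
    exact_mod_cast (by omega : c ≤ 2 * (c / 2) + 1)
  have hP : (0 : ℝ) < 2 ^ n := by positivity
  rw [pow_succ]
  constructor
  · field_simp
    linarith
  · field_simp
    linarith

noncomputable def cellAt (d n : ℕ) (t : ℝ) : Fin d → ℕ :=
  level d n (intervalIndex (2 ^ (d * n)) t)

theorem parent_cellAt_succ (d n : ℕ) (t : ℝ) : parent (cellAt d (n + 1) t) = cellAt d n t := by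
  rw [cellAt, parent_level_succ, Nat.mul_succ, pow_add, intervalIndex_mul_div _ (by positivity)]
  rfl

noncomputable def curve (d : ℕ) (t : ℝ) : EuclideanSpace ℝ (Fin d) :=
  WithLp.toLp 2 fun i => ⨆ n, (cellAt d n t i : ℝ) / 2 ^ n

theorem curve_apply_mem_Icc (d n : ℕ) (t : ℝ) (i : Fin d) :
    curve d t i ∈ Icc ((cellAt d n t i : ℝ) / 2 ^ n) (cellAt d n t i / 2 ^ n + (2 ^ n)⁻¹) :=
  ciSup_mem_Icc_of_le_succ (a := fun n => (cellAt d n t i : ℝ) / 2 ^ n) (fun n => by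
    simp only [← parent_cellAt_succ d n t]
    exact cast_div_two_pow_succ_mem_Icc _ n) n

theorem curve_apply_mem_unitInterval (d : ℕ) (t : ℝ) (i : Fin d) :
    curve d t i ∈ Icc (0 : ℝ) 1 := by
  simpa [cellAt, level] using curve_apply_mem_Icc d 0 t i

theorem norm_sub_le_of_forall_mem_Icc {x y : EuclideanSpace ℝ (Fin d)} {a b : Fin d → ℝ}
    {h : ℝ} (hx : ∀ i, x i ∈ Icc (a i) (a i + h)) (hy : ∀ i, y i ∈ Icc (b i) (b i + h))
    (hab : ∑ i, |a i - b i| ≤ h) : ‖x - y‖ ≤ √(d + 3) * h := by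
  have hab' (i : Fin d) : |a i - b i| ≤ h :=
    (Finset.single_le_sum (fun j _ => abs_nonneg (a j - b j)) (Finset.mem_univ i)).trans hab
  have h0 : 0 ≤ h := (Finset.sum_nonneg fun i _ => abs_nonneg (a i - b i)).trans hab
  -- the terms `3 * h * |a i - b i|` sum to at most `3 * h ^ 2`, whence the `3` in `√(d + 3)`
  have hterm (i : Fin d) : ‖(x - y) i‖ ^ 2 ≤ 3 * h * |a i - b i| + h ^ 2 := by
    have hxy : |x i - y i| ≤ |a i - b i| + h := by
      rw [abs_le]
      constructor <;> linarith [(hx i).1, (hx i).2, (hy i).1, (hy i).2, le_abs_self (a i - b i),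
        neg_abs_le (a i - b i)]
    rw [PiLp.sub_apply, Real.norm_eq_abs]
    nlinarith [pow_le_pow_left₀ (abs_nonneg _) hxy 2,
      mul_le_mul_of_nonneg_right (hab' i) (abs_nonneg (a i - b i))]
  calc ‖x - y‖ = √(∑ i, ‖(x - y) i‖ ^ 2) := EuclideanSpace.norm_eq _
    _ ≤ √(∑ i, (3 * h * |a i - b i| + h ^ 2)) :=
      Real.sqrt_le_sqrt (Finset.sum_le_sum fun i _ => hterm i)
    _ = √(3 * h * ∑ i, |a i - b i| + d * h ^ 2) := by
      rw [Finset.sum_add_distrib, ← Finset.mul_sum, Finset.sum_const, Finset.card_univ,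
        Fintype.card_fin, nsmul_eq_mul]
    _ ≤ √((d + 3) * h ^ 2) := Real.sqrt_le_sqrt (by nlinarith)
    _ = √(d + 3) * h := by rw [Real.sqrt_mul (by positivity), Real.sqrt_sq h0]

theorem sum_abs_sub_cellAt_le_one (hd : 2 ≤ d) {s t : ℝ} (hs : s ∈ Icc (0 : ℝ) 1)
    (ht : t ∈ Icc (0 : ℝ) 1) (n : ℕ) (hst : |s - t| ≤ (2 ^ (d * n))⁻¹) :
    ∑ i, |(cellAt d n s i : ℝ) - cellAt d n t i| ≤ 1 := by
  have hN : 0 < 2 ^ (d * n) := by positivity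
  have hst' := abs_sub_le_iff.mp hst
  have h1 := intervalIndex_le_add_one hN ht.1 (x := s) (by push_cast; linarith)
  have h2 := intervalIndex_le_add_one hN hs.1 (x := t) (by push_cast; linarith)
  have hs' := intervalIndex_lt hN s
  have ht' := intervalIndex_lt hN t
  unfold cellAt
  generalize intervalIndex (2 ^ (d * n)) s = a at *
  generalize intervalIndex (2 ^ (d * n)) t = b at *
  obtain rfl | rfl | rfl : a = b ∨ b = a + 1 ∨ a = b + 1 := by omega
  · simp
  · exact (cellAdj_level hd n ht').sum_abs_sub_eq_one.le
  · simp_rw [abs_sub_comm (level d n (b + 1) _ : ℝ)]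
    exact (cellAdj_level hd n hs').sum_abs_sub_eq_one.le

theorem norm_curve_sub_le_of_abs_sub_le (hd : 2 ≤ d) {s t : ℝ} (hs : s ∈ Icc (0 : ℝ) 1)
    (ht : t ∈ Icc (0 : ℝ) 1) (n : ℕ) (hst : |s - t| ≤ (2 ^ (d * n))⁻¹) :
    ‖curve d s - curve d t‖ ≤ √(d + 3) * (2 ^ n)⁻¹ := by
  refine norm_sub_le_of_forall_mem_Icc (curve_apply_mem_Icc d n s) (curve_apply_mem_Icc d n t) ?_
  simp_rw [div_sub_div_same, abs_div, abs_of_pos (pow_pos two_pos n : (0 : ℝ) < 2 ^ n),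
    ← Finset.sum_div, div_eq_mul_inv]
  exact mul_le_of_le_one_left (by positivity) (sum_abs_sub_cellAt_le_one hd hs ht n hst)

theorem norm_curve_sub_le (hd : 2 ≤ d) {s t : ℝ} (hs : s ∈ Icc (0 : ℝ) 1)
    (ht : t ∈ Icc (0 : ℝ) 1) :
    ‖curve d s - curve d t‖ ≤ 2 * √(d + 3) * |s - t| ^ (1 / (d : ℝ)) := by
  rcases eq_or_ne s t with rfl | hne
  · have : (d : ℝ)⁻¹ ≠ 0 := inv_ne_zero (Nat.cast_ne_zero.mpr (by omega))
    simp [Real.zero_rpow this]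
  have h0 : 0 < |s - t| := abs_pos.mpr (sub_ne_zero.mpr hne)
  have h1 : |s - t| ≤ 1 :=
    abs_sub_le_iff.mpr ⟨by linarith [hs.2, ht.1], by linarith [hs.1, ht.2]⟩
  obtain ⟨n, hlow, hup⟩ := exists_nat_pow_near_of_lt_one h0 h1 (y := (2 ^ d)⁻¹)
    (by positivity) (inv_lt_one_of_one_lt₀ (one_lt_pow₀ one_lt_two (by omega)))
  rw [inv_pow, ← pow_mul] at hlow hup
  have hroot : ((2 : ℝ) ^ (n + 1))⁻¹ ≤ |s - t| ^ (1 / (d : ℝ)) :=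
    calc ((2 : ℝ) ^ (n + 1))⁻¹ = ((((2 : ℝ) ^ (n + 1))⁻¹) ^ d) ^ ((d : ℝ)⁻¹) :=
          (Real.pow_rpow_inv_natCast (by positivity) (by omega)).symm
      _ ≤ |s - t| ^ (1 / (d : ℝ)) := by
          rw [one_div, inv_pow, ← pow_mul, mul_comm]
          gcongr
  calc ‖curve d s - curve d t‖ ≤ √(d + 3) * (2 ^ n)⁻¹ :=
        norm_curve_sub_le_of_abs_sub_le hd hs ht n hup
    _ = 2 * √(d + 3) * (2 ^ (n + 1))⁻¹ := by
        rw [pow_succ]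
        field_simp
    _ ≤ 2 * √(d + 3) * |s - t| ^ (1 / (d : ℝ)) := by gcongr

theorem continuousOn_of_dist_le_rpow {X Y : Type*} [PseudoMetricSpace X] [PseudoMetricSpace Y]
    {f : X → Y} {s : Set X} {C r : ℝ} (hr : 0 < r)
    (h : ∀ x ∈ s, ∀ y ∈ s, dist (f x) (f y) ≤ C * dist x y ^ r) : ContinuousOn f s := by
  intro x hx
  rw [ContinuousWithinAt, tendsto_iff_dist_tendsto_zero]
  have hlim : Filter.Tendsto (fun y => C * dist y x ^ r) (nhds x) (nhds 0) := by
    simpa [Real.zero_rpow hr.ne'] using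
      (((continuous_id.dist (continuous_const (y := x))).rpow_const fun _ =>
        Or.inr hr.le).const_mul C).tendsto x
  exact squeeze_zero' (Filter.Eventually.of_forall fun _ => dist_nonneg)
    (eventually_nhdsWithin_of_forall fun y hy => h y hy x hx) (hlim.mono_left nhdsWithin_le_nhds)

theorem exists_norm_curve_sub_le (hd : 2 ≤ d) {x : EuclideanSpace ℝ (Fin d)}
    (hx : ∀ i, x i ∈ Icc (0 : ℝ) 1) (n : ℕ) :
    ∃ t ∈ Icc (0 : ℝ) 1, ‖curve d t - x‖ ≤ √(d + 3) * (2 ^ n)⁻¹ := by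
  have h2n : 0 < 2 ^ n := by positivity
  obtain ⟨k, hk, hck⟩ := exists_level_eq hd n (c := fun i => intervalIndex (2 ^ n) (x i))
    fun i => intervalIndex_lt h2n _
  have hcell : cellAt d n (k / 2 ^ (d * n)) = fun i => intervalIndex (2 ^ n) (x i) := by
    rw [cellAt, ← hck]
    congr
    exact_mod_cast intervalIndex_natCast_div hk
  have hx' (i : Fin d) : x i ∈ Icc ((cellAt d n (k / 2 ^ (d * n)) i : ℝ) / 2 ^ n)
      (cellAt d n (k / 2 ^ (d * n)) i / 2 ^ n + (2 ^ n)⁻¹) := by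
    simpa [hcell] using intervalIndex_mem_Icc h2n (hx i)
  refine ⟨k / 2 ^ (d * n), ⟨by positivity, div_le_one_of_le₀ (by exact_mod_cast hk.le)
    (by positivity)⟩, ?_⟩
  exact norm_sub_le_of_forall_mem_Icc (curve_apply_mem_Icc d n _) hx' (by simp)

theorem exists_curve_eq (hd : 2 ≤ d) {x : EuclideanSpace ℝ (Fin d)}
    (hx : ∀ i, x i ∈ Icc (0 : ℝ) 1) : ∃ t ∈ Icc (0 : ℝ) 1, curve d t = x := by
  have hd0 : (0 : ℝ) < d := Nat.cast_pos.mpr (by omega)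
  have hcont : ContinuousOn (curve d) (Icc 0 1) :=
    continuousOn_of_dist_le_rpow (one_div_pos.mpr hd0) fun s hs t ht => by
      rw [dist_eq_norm, Real.dist_eq]
      exact norm_curve_sub_le hd hs ht
  have hC : 0 < √((d : ℝ) + 3) := Real.sqrt_pos.mpr (by positivity)
  have hdense : x ∈ closure (curve d '' Icc 0 1) := Metric.mem_closure_iff.mpr fun ε hε => by
    obtain ⟨n, hn⟩ := exists_pow_lt_of_lt_one (div_pos hε hC)
      (by norm_num : (2 : ℝ)⁻¹ < 1)
    obtain ⟨t, ht, hxt⟩ := exists_norm_curve_sub_le hd hx n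
    refine ⟨curve d t, mem_image_of_mem _ ht, ?_⟩
    rw [dist_comm, dist_eq_norm]
    rw [inv_pow, lt_div_iff₀' hC] at hn
    exact hxt.trans_lt hn
  rwa [(isCompact_Icc.image_of_continuousOn hcont).isClosed.closure_eq] at hdense

end SpaceFillingCurve

/-- Existence of a Hölder space-filling curve (Lemma B.2): for every `d ≥ 1`
there is a map `ψ_d : [0,1] → [0,1]^d` that is surjective onto the unit cube
`[0,1]^d` and Hölder continuous of order `1/d` with constant `2√(d+3)`. -/
theorem exists_holder_space_filling_curve (d : ℕ) (hd : 1 ≤ d) :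
    ∃ ψ : ℝ → EuclideanSpace ℝ (Fin d),
      (∀ t ∈ Set.Icc (0 : ℝ) 1, ∀ i, ψ t i ∈ Set.Icc (0 : ℝ) 1) ∧
      (∀ x : EuclideanSpace ℝ (Fin d), (∀ i, x i ∈ Set.Icc (0 : ℝ) 1) →
        ∃ t ∈ Set.Icc (0 : ℝ) 1, ψ t = x) ∧
      (∀ s ∈ Set.Icc (0 : ℝ) 1, ∀ t ∈ Set.Icc (0 : ℝ) 1,
        ‖ψ s - ψ t‖ ≤ 2 * Real.sqrt ((d : ℝ) + 3) * |s - t| ^ (1 / (d : ℝ))) := by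
  obtain rfl | hd : d = 1 ∨ 2 ≤ d := by omega
  · refine ⟨fun t => WithLp.toLp 2 fun _ => t, fun t ht _ => ht, fun x hx => ⟨x 0, hx 0, ?_⟩,
      fun s _ t _ => ?_⟩
    · ext i
      rw [Subsingleton.elim i 0]
    · rw [EuclideanSpace.norm_eq]
      norm_num [Real.sqrt_sq_eq_abs]
      linarith [abs_nonneg (s - t)]
  · open SpaceFillingCurve in
    exact ⟨curve d, fun t _ => curve_apply_mem_unitInterval d t,
      fun x hx => exists_curve_eq hd hx, fun s hs t ht => norm_curve_sub_le hd hs ht⟩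
end

section
/- Tangency identity for the two-arc-plus-segment construction (proof of Lemma 4.3, Appendix C): Let τ > 0, let δ ∈ [0, 2τ], and let b > 0 satisfy b² ≥ δ·(4τ − δ). Define t₀ = arccos( (2τ·(2τ − δ) + b·sqrt(b² − δ·(4τ − δ))) / (b² + (2τ − δ)²) ) (the argument of arccos lies in [0,1] under these hypotheses). Then cos(t₀)·(−δ + 2τ·(1 − cos t₀)) + sin(t₀)·(b − 2τ·sin t₀) = 0; equivalently, the vector (b − 2τ·sin t₀, −δ + 2τ·(1 − cos t₀)) in ℝ² is orthogonal to (sin t₀, cos t₀), hence parallel to (cos t₀, −sin t₀). -/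
open Real

noncomputable section

/-- Tangency identity for the two-arc-plus-segment construction (proof of
Lemma 4.3, Appendix C): for `τ > 0`, `δ ∈ [0, 2τ]` and `b > 0` with
`b² ≥ δ(4τ - δ)`, the argument
`A = (2τ(2τ - δ) + b√(b² - δ(4τ - δ))) / (b² + (2τ - δ)²)` of `arccos` lies in
`[0, 1]`, and `t₀ = arccos A` satisfies
`cos t₀ (-δ + 2τ(1 - cos t₀)) + sin t₀ (b - 2τ sin t₀) = 0`, i.e. the vector
`(b - 2τ sin t₀, -δ + 2τ(1 - cos t₀))` is orthogonal to `(sin t₀, cos t₀)`. -/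
theorem tangency_identity_arc_segment
    (τ δ b : ℝ) (hτ : 0 < τ) (hδ₀ : 0 ≤ δ) (hδ₂ : δ ≤ 2 * τ)
    (hb : 0 < b) (hb₂ : δ * (4 * τ - δ) ≤ b ^ 2) :
    0 ≤ (2 * τ * (2 * τ - δ) + b * Real.sqrt (b ^ 2 - δ * (4 * τ - δ))) /
          (b ^ 2 + (2 * τ - δ) ^ 2) ∧
    (2 * τ * (2 * τ - δ) + b * Real.sqrt (b ^ 2 - δ * (4 * τ - δ))) /
          (b ^ 2 + (2 * τ - δ) ^ 2) ≤ 1 ∧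
    Real.cos (Real.arccos
          ((2 * τ * (2 * τ - δ) + b * Real.sqrt (b ^ 2 - δ * (4 * τ - δ))) /
            (b ^ 2 + (2 * τ - δ) ^ 2))) *
        (-δ + 2 * τ * (1 - Real.cos (Real.arccos
          ((2 * τ * (2 * τ - δ) + b * Real.sqrt (b ^ 2 - δ * (4 * τ - δ))) /
            (b ^ 2 + (2 * τ - δ) ^ 2))))) +
      Real.sin (Real.arccos
          ((2 * τ * (2 * τ - δ) + b * Real.sqrt (b ^ 2 - δ * (4 * τ - δ))) /
            (b ^ 2 + (2 * τ - δ) ^ 2))) *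
        (b - 2 * τ * Real.sin (Real.arccos
          ((2 * τ * (2 * τ - δ) + b * Real.sqrt (b ^ 2 - δ * (4 * τ - δ))) /
            (b ^ 2 + (2 * τ - δ) ^ 2)))) = 0 := by

  set s := Real.sqrt (b ^ 2 - δ * (4 * τ - δ)) with hs
  have hs0 : 0 ≤ s := Real.sqrt_nonneg _
  have hs2 : s ^ 2 = b ^ 2 - δ * (4 * τ - δ) := Real.sq_sqrt (by linarith)
  have hsb : s ≤ b := by
    nlinarith [Real.sq_sqrt (show (0:ℝ) ≤ b ^ 2 - δ * (4 * τ - δ) by linarith)]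
  set D := b ^ 2 + (2 * τ - δ) ^ 2 with hD
  have hD0 : 0 < D := by positivity
  set A := (2 * τ * (2 * τ - δ) + b * s) / D with hA
  have hA0 : 0 ≤ A := by
    apply div_nonneg _ hD0.le
    have : 0 ≤ 2 * τ - δ := by linarith
    positivity
  have hnum : 0 ≤ 2 * τ * b - (2 * τ - δ) * s := by nlinarith
  have key : 1 - A ^ 2 = ((2 * τ * b - (2 * τ - δ) * s) / D) ^ 2 := by
    rw [hA]
    field_simp
    nlinarith [hs2, sq_nonneg s]
  have hA1 : A ≤ 1 := by
    nlinarith [sq_nonneg ((2 * τ * b - (2 * τ - δ) * s) / D), key, hA0]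
  refine ⟨hA0, hA1, ?_⟩
  have hcos : Real.cos (Real.arccos A) = A := Real.cos_arccos (by linarith) hA1
  have hsin : Real.sin (Real.arccos A) = (2 * τ * b - (2 * τ - δ) * s) / D := by
    rw [Real.sin_arccos, key]
    exact Real.sqrt_sq (div_nonneg hnum hD0.le)
  rw [hcos, hsin, hA]
  field_simp
  linear_combination (-2 * τ * (b ^ 2 + (2 * τ - δ) ^ 2)) * hs2


end
end
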